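/- arXiv:1910.08551 — 8 statements merged into one kernel-verified Lean document; each statement's English description precedes it below -/
import Mathlib

section
/- In the BMW algebra W_n(q,μ), setting σ'_i := σ_i − (q − q^{-1})·1, one has σ'_i κ_{i+1} σ'_i = σ'_{i+1} κ_i σ'_{i+1}. -/
/-!
Write `a, b` for `σ_i, σ_{i+1}`, `e_a, e_b` for `κ_i, κ_{i+1}` and `d = q - q⁻¹`. The defining
formula of `κ` makes `a⁻¹ = a - d + d e_a`, so `σ'_i = a - d = a⁻¹ - d e_a`. The braid relation
gives `a b e_a = e_b a b`, and together with `e_b a e_b = μ⁻¹ e_b` this yields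
`a⁻¹ e_b = b e_a e_b` and `e_b a⁻¹ = e_b e_a b`; the relations `e_a b^{±1} e_a = μ^{∓1} e_a` give
`e_a e_b e_a = e_a`. Expanding `(a⁻¹ - d e_a) e_b (a⁻¹ - d e_a)` with these identities produces
`b e_a b - d e_a b - d b e_a + d² e_a`, which is the expansion of `(b - d) e_a (b - d)`.
-/

namespace BMW

variable {K A : Type*} [Field K] [Ring A] [Algebra K A]

/-- `s` plays `σ_i`, `s'` its inverse and `e` the element `κ_i`; `skein` is the definition of
`κ_i` multiplied out, with `d = q - q⁻¹`. -/
structure IsGenerator (d μ : K) (s s' e : A) : Prop where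
  mul_inv : s * s' = 1
  inv_mul : s' * s = 1
  skein : (μ * d) • e = 1 + d • s - s * s
  mul_kappa : s * e = μ • e
  kappa_mul : e * s = μ • e

theorem smul_sub_mul_inv_smul_add {q : K} (hq : q ≠ 0) (s : A) :
    (q • (1 : A) - s) * (q⁻¹ • (1 : A) + s) = 1 + (q - q⁻¹) • s - s * s := by
  simp only [sub_mul, mul_add, smul_mul_assoc, mul_smul_comm, mul_one, one_mul]
  match_scalars
  · field_simp
  all_goals ring

theorem sub_inv_ne_zero {q : K} (hq0 : q ≠ 0) (hq1 : q ≠ 1) (hq2 : q ≠ -1) : q - q⁻¹ ≠ 0 := by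
  intro h
  have hsq : q * q = 1 := by
    rw [sub_eq_zero] at h
    nth_rewrite 2 [h]
    exact mul_inv_cancel₀ hq0
  rcases mul_self_eq_one_iff.mp hsq with h1 | h1
  exacts [hq1 h1, hq2 h1]

theorem braid_mul_skein {a b : A} (hbr : a * b * a = b * a * b) (d : K) :
    a * b * (1 + d • a - a * a) = (1 + d • b - b * b) * (a * b) := by
  have hsq : a * b * (a * a) = b * b * (a * b) := by
    calc a * b * (a * a) = b * a * b * a := by rw [← mul_assoc, hbr]
      _ = b * (a * b * a) := by simp only [mul_assoc]
      _ = b * b * (a * b) := by rw [hbr]; simp only [mul_assoc]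
  have hlin : a * b * a = b * (a * b) := by rw [hbr, mul_assoc]
  simp only [mul_add, mul_sub, add_mul, sub_mul, mul_one, one_mul, mul_smul_comm,
    smul_mul_assoc, hsq, hlin]

namespace IsGenerator

variable {d μ : K} {a a' ea : A}

theorem inv_eq (ha : IsGenerator d μ a a' ea) : a' = a - d • 1 + d • ea := by
  have hright : a * (a - d • 1 + d • ea) = 1 := by
    have hsq : a * a = 1 + d • a - (μ * d) • ea := by rw [ha.skein]; abel
    rw [mul_add, mul_sub, mul_smul_comm, mul_smul_comm, ha.mul_kappa, hsq, smul_smul, mul_one]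
    module
  calc a' = a' * a * (a - d • 1 + d • ea) := by rw [mul_assoc, hright, mul_one]
    _ = a - d • 1 + d • ea := by rw [ha.inv_mul, one_mul]

theorem smul_kappa_mul_kappa (ha : IsGenerator d μ a a' ea) :
    (μ * d) • (ea * ea) = (1 + d * μ - μ * μ) • ea := by
  rw [← mul_smul_comm, ha.skein, mul_sub, mul_add, mul_smul_comm, ← mul_assoc, ha.kappa_mul,
    smul_mul_assoc, ha.kappa_mul, mul_one]
  module

variable {b b' eb : A}

theorem kappa_mul_kappa_mul_kappa (ha : IsGenerator d μ a a' ea) (hb : IsGenerator d μ b b' eb)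
    (hμ : μ ≠ 0) (hd : d ≠ 0) (h₁ : ea * (b * ea) = μ⁻¹ • ea)
    (h₂ : ea * (b' * ea) = μ • ea) : ea * eb * ea = ea := by
  have hexpand : μ • ea = μ⁻¹ • ea - d • (ea * ea) + d • (ea * eb * ea) := by
    rw [← h₂, hb.inv_eq, ← h₁]
    simp only [add_mul, sub_mul, mul_add, mul_sub, smul_mul_assoc, mul_smul_comm, one_mul,
      mul_assoc]
  have hμd : μ * d ≠ 0 := mul_ne_zero hμ hd
  apply (smul_right_inj hμd).mp
  have key := congrArg (μ • ·) hexpand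
  simp only [smul_add, smul_sub, smul_smul, mul_inv_cancel₀ hμ, ha.smul_kappa_mul_kappa] at key
  linear_combination (norm := module) -key

theorem mul_mul_kappa_of_braid (ha : IsGenerator d μ a a' ea) (hb : IsGenerator d μ b b' eb)
    (hμd : μ * d ≠ 0) (hbr : a * b * a = b * a * b) : a * b * ea = eb * (a * b) := by
  apply (smul_right_inj hμd).mp
  rw [← mul_smul_comm, ha.skein, braid_mul_skein hbr, ← hb.skein, smul_mul_assoc]

theorem inv_mul_kappa (ha : IsGenerator d μ a a' ea) (hb : IsGenerator d μ b b' eb)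
    (hμ : μ ≠ 0) (hd : d ≠ 0) (hbr : a * b * a = b * a * b)
    (h : eb * (a * eb) = μ⁻¹ • eb) : a' * eb = b * (ea * eb) := by
  have hcancel : a * (b * (ea * eb)) = eb := by
    calc a * (b * (ea * eb)) = a * b * ea * eb := by simp only [mul_assoc]
      _ = eb * (a * (b * eb)) := by
        rw [mul_mul_kappa_of_braid ha hb (mul_ne_zero hμ hd) hbr]; simp only [mul_assoc]
      _ = eb := by
        rw [hb.mul_kappa, mul_smul_comm, mul_smul_comm, h, smul_smul, mul_inv_cancel₀ hμ,
          one_smul]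
  calc a' * eb = a' * a * (b * (ea * eb)) := by rw [mul_assoc, hcancel]
    _ = b * (ea * eb) := by rw [ha.inv_mul, one_mul]

theorem kappa_mul_inv (ha : IsGenerator d μ a a' ea) (hb : IsGenerator d μ b b' eb)
    (hμ : μ ≠ 0) (hd : d ≠ 0) (hbr : a * b * a = b * a * b)
    (h : eb * (a * eb) = μ⁻¹ • eb) : eb * a' = eb * (ea * b) := by
  have hcancel : eb * (ea * b) * a = eb := by
    calc eb * (ea * b) * a = eb * (ea * (b * a)) := by simp only [mul_assoc]
      _ = eb * b * (a * eb) := by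
        rw [← mul_mul_kappa_of_braid hb ha (mul_ne_zero hμ hd) hbr.symm]; simp only [mul_assoc]
      _ = eb := by
        rw [hb.kappa_mul, smul_mul_assoc, h, smul_smul, mul_inv_cancel₀ hμ, one_smul]
  calc eb * a' = eb * (ea * b) * (a * a') := by rw [← mul_assoc, hcancel]
    _ = eb * (ea * b) := by rw [ha.mul_inv, mul_one]

theorem sub_smul_one_mul_kappa_mul (ha : IsGenerator d μ a a' ea) (hb : IsGenerator d μ b b' eb)
    (hμ : μ ≠ 0) (hd : d ≠ 0) (hbr : a * b * a = b * a * b)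
    (h₁ : ea * (b * ea) = μ⁻¹ • ea) (h₂ : ea * (b' * ea) = μ • ea)
    (h₃ : eb * (a * eb) = μ⁻¹ • eb) :
    (a - d • 1) * eb * (a - d • 1) = (b - d • 1) * ea * (b - d • 1) := by
  have hsub : a - d • (1 : A) = a' - d • ea := by rw [ha.inv_eq]; abel
  have heee : ea * eb * ea = ea := ha.kappa_mul_kappa_mul_kappa hb hμ hd h₁ h₂
  have hleft := ha.inv_mul_kappa hb hμ hd hbr h₃
  have hright := ha.kappa_mul_inv hb hμ hd hbr h₃
  calc (a - d • 1) * eb * (a - d • 1) = (a' - d • ea) * eb * (a' - d • ea) := by rw [hsub]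
    _ = a' * eb * a' - d • (a' * eb * ea) - d • (ea * (eb * a')) + (d * d) • (ea * eb * ea) := by
      simp only [sub_mul, mul_sub, smul_mul_assoc, mul_smul_comm, mul_assoc]
      module
    _ = b * (ea * eb * ea) * b - d • (b * (ea * eb * ea)) - d • (ea * eb * ea * b)
        + (d * d) • (ea * eb * ea) := by
      rw [hleft]
      simp only [mul_assoc]
      rw [hright]
    _ = (b - d • 1) * ea * (b - d • 1) := by
      rw [heee]
      simp only [sub_mul, mul_sub, smul_mul_assoc, mul_smul_comm, mul_one, one_mul]
      module

end IsGenerator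

end BMW

theorem bmw_sigma_prime_kappa_general
    {A : Type*} [Ring A] [Algebra ℂ A] (n : ℕ) (q μ : ℂ)
    (hq0 : q ≠ 0) (hq1 : q ≠ 1) (hq2 : q ≠ -1)
    (hμ0 : μ ≠ 0)
    (σ σinv : ℕ → A) (κ : ℕ → A)
    (hinv : ∀ i, 1 ≤ i → i ≤ n - 1 → σ i * σinv i = 1 ∧ σinv i * σ i = 1)
    (hκ : ∀ i, 1 ≤ i → i ≤ n - 1 →
      κ i = (μ * (q - q⁻¹))⁻¹ • ((q • (1 : A) - σ i) * (q⁻¹ • (1 : A) + σ i)))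
    (hbraid : ∀ i, 1 ≤ i → i + 1 ≤ n - 1 →
      σ i * σ (i + 1) * σ i = σ (i + 1) * σ i * σ (i + 1))
    (hκσ : ∀ i, 1 ≤ i → i ≤ n - 1 →
      σ i * κ i = μ • κ i ∧ κ i * σ i = μ • κ i)
    (hκσκ : ∀ i, 1 ≤ i → i + 1 ≤ n - 1 →
      κ i * (σ (i + 1) * κ i) = μ⁻¹ • κ i ∧
      κ i * (σinv (i + 1) * κ i) = μ • κ i ∧
      κ (i + 1) * (σ i * κ (i + 1)) = μ⁻¹ • κ (i + 1) ∧
      κ (i + 1) * (σinv i * κ (i + 1)) = μ • κ (i + 1)) :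
    ∀ i, 1 ≤ i → i + 1 ≤ n - 1 →
      (σ i - (q - q⁻¹) • (1 : A)) * κ (i + 1) * (σ i - (q - q⁻¹) • (1 : A)) =
      (σ (i + 1) - (q - q⁻¹) • (1 : A)) * κ i * (σ (i + 1) - (q - q⁻¹) • (1 : A)) := by
  have hd := BMW.sub_inv_ne_zero hq0 hq1 hq2
  have hgen : ∀ j, 1 ≤ j → j ≤ n - 1 → BMW.IsGenerator (q - q⁻¹) μ (σ j) (σinv j) (κ j) :=
    fun j hj hjn =>
      { mul_inv := (hinv j hj hjn).1
        inv_mul := (hinv j hj hjn).2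
        skein := by
          rw [hκ j hj hjn, smul_inv_smul₀ (mul_ne_zero hμ0 hd),
            BMW.smul_sub_mul_inv_smul_add hq0]
        mul_kappa := (hκσ j hj hjn).1
        kappa_mul := (hκσ j hj hjn).2 }
  intro i hi hin
  obtain ⟨h₁, h₂, h₃, -⟩ := hκσκ i hi hin
  exact (hgen i hi (by omega)).sub_smul_one_mul_kappa_mul (hgen (i + 1) (by omega) hin)
    hμ0 hd (hbraid i hi hin) h₁ h₂ h₃

/-- In the BMW algebra, with σ'_i = σ_i - (q-q⁻¹)·1, one has σ'_i κ_{i+1} σ'_i = σ'_{i+1} κ_i σ'_{i+1}. -/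
theorem bmw_sigma_prime_kappa
    {A : Type*} [Ring A] [Algebra ℂ A] (n : ℕ) (q μ : ℂ)
    (hq0 : q ≠ 0) (hq1 : q ≠ 1) (hq2 : q ≠ -1)
    (hμ0 : μ ≠ 0) (hμ1 : μ ≠ q) (hμ2 : μ ≠ -q⁻¹)
    (σ σinv : ℕ → A) (κ : ℕ → A)
    (hinv : ∀ i, 1 ≤ i → i ≤ n - 1 → σ i * σinv i = 1 ∧ σinv i * σ i = 1)
    (hκ : ∀ i, 1 ≤ i → i ≤ n - 1 →
      κ i = (μ * (q - q⁻¹))⁻¹ • ((q • (1 : A) - σ i) * (q⁻¹ • (1 : A) + σ i)))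
    (hbraid : ∀ i, 1 ≤ i → i + 1 ≤ n - 1 →
      σ i * σ (i + 1) * σ i = σ (i + 1) * σ i * σ (i + 1))
    (hfar : ∀ i j, 1 ≤ i → 1 ≤ j → i ≤ n - 1 → j ≤ n - 1 → i + 1 < j →
      σ i * σ j = σ j * σ i)
    (hκσ : ∀ i, 1 ≤ i → i ≤ n - 1 →
      σ i * κ i = μ • κ i ∧ κ i * σ i = μ • κ i)
    (hκσκ : ∀ i, 1 ≤ i → i + 1 ≤ n - 1 →
      κ i * (σ (i + 1) * κ i) = μ⁻¹ • κ i ∧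
      κ i * (σinv (i + 1) * κ i) = μ • κ i ∧
      κ (i + 1) * (σ i * κ (i + 1)) = μ⁻¹ • κ (i + 1) ∧
      κ (i + 1) * (σinv i * κ (i + 1)) = μ • κ (i + 1)) :
    ∀ i, 1 ≤ i → i + 1 ≤ n - 1 →
      (σ i - (q - q⁻¹) • (1 : A)) * κ (i + 1) * (σ i - (q - q⁻¹) • (1 : A)) =
      (σ (i + 1) - (q - q⁻¹) • (1 : A)) * κ i * (σ (i + 1) - (q - q⁻¹) • (1 : A)) :=
  bmw_sigma_prime_kappa_general n q μ hq0 hq1 hq2 hμ0 σ σinv κ hinv hκ hbraid hκσ hκσκ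
end

section
/- In the BMW algebra, κ_{i+1} κ_{i−1} κ_i σ_{i−1} = κ_{i+1} κ_{i−1} κ_i σ_{i+1}, i.e. the product κ_{i+1} κ_{i−1} κ_i is unchanged when right-multiplied by σ_{i−1} versus σ_{i+1}. -/
/-!
Write `a = κ_{i-1}`, `b = κ_i`, `c = κ_{i+1}`. The relations `b σ_{i-1} = b a σ_i⁻¹` and
`b σ_{i+1} = b c σ_i⁻¹` let `a b a = a` and `c b c = c` absorb the middle `b`, so that
both sides reduce to `c a σ_i⁻¹ = a c σ_i⁻¹`; the far commutation `a c = c a` moves `a` or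
`c` next to `b` as needed.
-/

theorem mul_mul_mul_eq_of_mul_eq_mul_mul {M : Type*} [Semigroup M] {a b s t : M}
    (haba : a * b * a = a) (hs : b * s = b * a * t) (x : M) :
    x * a * b * s = x * a * t := by
  rw [mul_assoc (x * a), hs, ← mul_assoc, ← mul_assoc, mul_assoc x, mul_assoc x, haba]

theorem bmw_kappa_triple_sigma_general
    {A : Type*} [Ring A] (n : ℕ) (σ σinv κ : ℕ → A)
    (hks : ∀ i, 1 ≤ i → i + 1 ≤ n - 1 →
      κ i * σ (i + 1) = κ i * κ (i + 1) * σinv i ∧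
      κ (i + 1) * σ i = κ (i + 1) * κ i * σinv (i + 1) ∧
      σ (i + 1) * κ i = σinv i * (κ (i + 1) * κ i) ∧
      σ i * κ (i + 1) = σinv (i + 1) * (κ i * κ (i + 1)))
    (hkkk : ∀ i, 1 ≤ i → i + 1 ≤ n - 1 →
      κ i * κ (i + 1) * κ i = κ i ∧ κ (i + 1) * κ i * κ (i + 1) = κ (i + 1))
    (hfar : ∀ i j, 1 ≤ i → i + 1 < j → j ≤ n - 1 → κ i * κ j = κ j * κ i) :
    ∀ i, 2 ≤ i → i + 1 ≤ n - 1 →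
      κ (i + 1) * κ (i - 1) * κ i * σ (i - 1) =
      κ (i + 1) * κ (i - 1) * κ i * σ (i + 1) := by
  intro i hi hn
  obtain ⟨j, rfl⟩ : ∃ j, i = j + 1 := ⟨i - 1, by omega⟩
  simp only [Nat.add_sub_cancel]
  have hj : 1 ≤ j := by omega
  have hcomm : κ j * κ (j + 1 + 1) = κ (j + 1 + 1) * κ j := hfar j _ hj (by omega) hn
  calc κ (j + 1 + 1) * κ j * κ (j + 1) * σ j
      = κ (j + 1 + 1) * κ j * σinv (j + 1) :=
        mul_mul_mul_eq_of_mul_eq_mul_mul (hkkk j hj (by omega)).1 (hks j hj (by omega)).2.1 _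
    _ = κ j * κ (j + 1 + 1) * σinv (j + 1) := by rw [hcomm]
    _ = κ j * κ (j + 1 + 1) * κ (j + 1) * σ (j + 1 + 1) :=
        (mul_mul_mul_eq_of_mul_eq_mul_mul (hkkk (j + 1) (by omega) hn).2
          (hks (j + 1) (by omega) hn).1 _).symm
    _ = κ (j + 1 + 1) * κ j * κ (j + 1) * σ (j + 1 + 1) := by rw [hcomm]

/-- In the BMW algebra, `κ_{i+1} κ_{i-1} κ_i σ_{i-1} = κ_{i+1} κ_{i-1} κ_i σ_{i+1}`. -/
theorem bmw_kappa_triple_sigma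
    {A : Type*} [Ring A] (n : ℕ) (σ σinv κ : ℕ → A)
    (hinv : ∀ i, 1 ≤ i → i ≤ n - 1 → σ i * σinv i = 1 ∧ σinv i * σ i = 1)
    (hks : ∀ i, 1 ≤ i → i + 1 ≤ n - 1 →
      κ i * σ (i + 1) = κ i * κ (i + 1) * σinv i ∧
      κ (i + 1) * σ i = κ (i + 1) * κ i * σinv (i + 1) ∧
      σ (i + 1) * κ i = σinv i * (κ (i + 1) * κ i) ∧
      σ i * κ (i + 1) = σinv (i + 1) * (κ i * κ (i + 1)))
    (hkkk : ∀ i, 1 ≤ i → i + 1 ≤ n - 1 →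
      κ i * κ (i + 1) * κ i = κ i ∧ κ (i + 1) * κ i * κ (i + 1) = κ (i + 1))
    (hfar : ∀ i j, 1 ≤ i → i + 1 < j → j ≤ n - 1 → κ i * κ j = κ j * κ i) :
    ∀ i, 2 ≤ i → i + 1 ≤ n - 1 →
      κ (i + 1) * κ (i - 1) * κ i * σ (i - 1) =
      κ (i + 1) * κ (i - 1) * κ i * σ (i + 1) :=
  bmw_kappa_triple_sigma_general n σ σinv κ hks hkkk hfar
end

section
/- In the BMW algebra, κ_i κ_{i+1} κ_{i+2} σ_i = σ_{i+2} κ_i κ_{i+1} κ_{i+2}. -/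
/-!
Write `X = κᵢ κᵢ₊₁ κᵢ₊₂`. Since `σᵢ₊₂⁻¹` commutes with `κᵢ`, the relations
`σᵢ₊₁ κᵢ₊₂ = σᵢ₊₂⁻¹ κᵢ₊₁ κᵢ₊₂` and `κᵢ σᵢ₊₁ = κᵢ κᵢ₊₁ σᵢ⁻¹` give
`σᵢ₊₂⁻¹ X = κᵢ σᵢ₊₁ κᵢ₊₂ = κᵢ κᵢ₊₁ σᵢ⁻¹ κᵢ₊₂ = X σᵢ⁻¹`, using that `σᵢ⁻¹` commutes with `κᵢ₊₂`.
So `X` semiconjugates `σᵢ⁻¹` to `σᵢ₊₂⁻¹`, hence also `σᵢ` to `σᵢ₊₂`.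
-/

theorem semiconjBy_mul_mul_of_tangle {M : Type*} [Monoid M] {e₁ e₂ e₃ b ainv cinv : M}
    (hc : Commute cinv e₁) (hb : b * e₃ = cinv * (e₂ * e₃)) (he : e₁ * b = e₁ * e₂ * ainv)
    (ha : Commute ainv e₃) :
    SemiconjBy (e₁ * e₂ * e₃) ainv cinv :=
  calc e₁ * e₂ * e₃ * ainv = e₁ * e₂ * ainv * e₃ := by rw [mul_assoc _ e₃, ← ha.eq, ← mul_assoc]
    _ = e₁ * (cinv * (e₂ * e₃)) := by rw [← he, mul_assoc, hb]
    _ = cinv * (e₁ * e₂ * e₃) := by rw [← mul_assoc, ← hc.eq]; simp only [mul_assoc]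

theorem bmw_kappa_string_sigma_general
    {A : Type*} [Ring A] (n : ℕ) (σ σinv κ : ℕ → A)
    (hinv : ∀ i, 1 ≤ i → i ≤ n - 1 → σ i * σinv i = 1 ∧ σinv i * σ i = 1)
    (hks : ∀ i, 1 ≤ i → i + 1 ≤ n - 1 →
      κ i * σ (i + 1) = κ i * κ (i + 1) * σinv i ∧
      κ (i + 1) * σ i = κ (i + 1) * κ i * σinv (i + 1) ∧
      σ (i + 1) * κ i = σinv i * (κ (i + 1) * κ i) ∧
      σ i * κ (i + 1) = σinv (i + 1) * (κ i * κ (i + 1)))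
    (hfarσκ : ∀ i j, 1 ≤ i → 1 ≤ j → i ≤ n - 1 → j ≤ n - 1 →
      (i + 1 < j ∨ j + 1 < i) → σ i * κ j = κ j * σ i) :
    ∀ i, 1 ≤ i → i + 2 ≤ n - 1 →
      κ i * κ (i + 1) * κ (i + 2) * σ i =
      σ (i + 2) * (κ i * κ (i + 1) * κ (i + 2)) := by
  intro i hi hi₂
  obtain ⟨hσ₀, hσ₀'⟩ := hinv i hi (by omega)
  obtain ⟨hσ₂, hσ₂'⟩ := hinv (i + 2) (by omega) hi₂
  let u₀ : Aˣ := ⟨σ i, σinv i, hσ₀, hσ₀'⟩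
  let u₂ : Aˣ := ⟨σ (i + 2), σinv (i + 2), hσ₂, hσ₂'⟩
  have hfar₂₀ : Commute (u₂ : A) (κ i) := hfarσκ (i + 2) i (by omega) hi hi₂ (by omega) (by omega)
  have hfar₀₂ : Commute (u₀ : A) (κ (i + 2)) :=
    hfarσκ i (i + 2) hi (by omega) (by omega) hi₂ (by omega)
  have key : SemiconjBy (κ i * κ (i + 1) * κ (i + 2)) ↑u₀⁻¹ ↑u₂⁻¹ :=
    semiconjBy_mul_mul_of_tangle hfar₂₀.units_inv_left (hks (i + 1) (by omega) (by omega)).2.2.2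
      (hks i hi (by omega)).1 hfar₀₂.units_inv_left
  exact SemiconjBy.units_inv_right_iff.1 key

/-- In the BMW algebra, `κ_i κ_{i+1} κ_{i+2} σ_i = σ_{i+2} κ_i κ_{i+1} κ_{i+2}`. -/
theorem bmw_kappa_string_sigma
    {A : Type*} [Ring A] (n : ℕ) (σ σinv κ : ℕ → A)
    (hinv : ∀ i, 1 ≤ i → i ≤ n - 1 → σ i * σinv i = 1 ∧ σinv i * σ i = 1)
    (hks : ∀ i, 1 ≤ i → i + 1 ≤ n - 1 →
      κ i * σ (i + 1) = κ i * κ (i + 1) * σinv i ∧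
      κ (i + 1) * σ i = κ (i + 1) * κ i * σinv (i + 1) ∧
      σ (i + 1) * κ i = σinv i * (κ (i + 1) * κ i) ∧
      σ i * κ (i + 1) = σinv (i + 1) * (κ i * κ (i + 1)))
    (hfarκκ : ∀ i j, 1 ≤ i → i + 1 < j → j ≤ n - 1 → κ i * κ j = κ j * κ i)
    (hfarσκ : ∀ i j, 1 ≤ i → 1 ≤ j → i ≤ n - 1 → j ≤ n - 1 →
      (i + 1 < j ∨ j + 1 < i) → σ i * κ j = κ j * σ i) :
    ∀ i, 1 ≤ i → i + 2 ≤ n - 1 →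
      κ i * κ (i + 1) * κ (i + 2) * σ i =
      σ (i + 2) * (κ i * κ (i + 1) * κ (i + 2)) :=
  bmw_kappa_string_sigma_general n σ σinv κ hinv hks hfarσκ
end

section
/- Let R ∈ End(V⊗V) be skew invertible with skew inverse Ψ (i.e. Tr₂(R₁₂ Ψ₂₃) = Tr₂(Ψ₁₂ R₂₃) = P₁₃), and let {X,F} be a compatible pair with X skew invertible and C_X := Tr₁(Ψ_X)₁₂. Then for any matrix M with entries in an algebra W, Tr₁( (C_X)₁ F₁₂^{ε} M₂ F₁₂^{−ε} ) = I₂ · tr(C_X M) for ε = ±1. -/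
noncomputable section
open Matrix BigOperators

/-- Operators on `V ⊗ V`, as matrices indexed by pairs. -/
abbrev TwoLeg (N : ℕ) (R : Type) := Matrix (Fin N × Fin N) (Fin N × Fin N) R

/-- Operators on `V ⊗ V ⊗ V`. -/
abbrev ThreeLeg (N : ℕ) (R : Type) :=
  Matrix (Fin N × Fin N × Fin N) (Fin N × Fin N × Fin N) R

variable {N : ℕ} {R : Type} [Ring R]

/-- `X₁₂` acting on legs 1,2 of three tensor factors. -/
def leg12 (X : TwoLeg N R) : ThreeLeg N R := fun p q =>
  X (p.1, p.2.1) (q.1, q.2.1) * (if p.2.2 = q.2.2 then 1 else 0)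

/-- `X₂₃` acting on legs 2,3. -/
def leg23 (X : TwoLeg N R) : ThreeLeg N R := fun p q =>
  X (p.2.1, p.2.2) (q.2.1, q.2.2) * (if p.1 = q.1 then 1 else 0)

/-- `X₁₃` acting on legs 1,3. -/
def leg13 (X : TwoLeg N R) : ThreeLeg N R := fun p q =>
  X (p.1, p.2.2) (q.1, q.2.2) * (if p.2.1 = q.2.1 then 1 else 0)

/-- Partial trace of a three-leg operator over the middle leg. -/
def ptrMid (Y : ThreeLeg N R) : TwoLeg N R := fun p q =>
  ∑ k : Fin N, Y (p.1, k, p.2) (q.1, k, q.2)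

/-- Partial trace of a two-leg operator over leg 1. -/
def trLeg1 (X : TwoLeg N R) : Matrix (Fin N) (Fin N) R := fun i j =>
  ∑ k : Fin N, X (k, i) (k, j)

/-- Partial trace of a two-leg operator over leg 2. -/
def trLeg2 (X : TwoLeg N R) : Matrix (Fin N) (Fin N) R := fun i j =>
  ∑ k : Fin N, X (i, k) (j, k)

/-- `C₁`: a one-leg operator acting on the first leg. -/
def leg1 (C : Matrix (Fin N) (Fin N) R) : TwoLeg N R := fun p q =>
  C p.1 q.1 * (if p.2 = q.2 then 1 else 0)

/-- `C₂`: a one-leg operator acting on the second leg. -/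
def leg2 (C : Matrix (Fin N) (Fin N) R) : TwoLeg N R := fun p q =>
  C p.2 q.2 * (if p.1 = q.1 then 1 else 0)

/-- The permutation operator `P₁₃` (on the two remaining legs). -/
def permP (N : ℕ) (R : Type) [Ring R] : TwoLeg N R := fun p q =>
  if p.1 = q.2 ∧ p.2 = q.1 then 1 else 0

/-- `X` is skew invertible with skew inverse `Ψ`:
`Tr₂(X₁₂ Ψ₂₃) = Tr₂(Ψ₁₂ X₂₃) = P₁₃`. -/
def IsSkewInverse (X Ψ : TwoLeg N R) : Prop :=
  ptrMid (leg12 X * leg23 Ψ) = permP N R ∧ ptrMid (leg12 Ψ * leg23 X) = permP N R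

/-- `{X,F}` is a compatible pair: `X₁F₂F₁ = F₂F₁X₂` and `X₂F₁F₂ = F₁F₂X₁`. -/
def IsCompatiblePair (X F : TwoLeg N R) : Prop :=
  leg12 X * leg23 F * leg12 F = leg23 F * leg12 F * leg23 X ∧
  leg23 X * leg12 F * leg23 F = leg12 F * leg23 F * leg12 X

/-- `X₂₁ = P X P`. -/
def swapLegs (X : TwoLeg N R) : TwoLeg N R := fun p q => X (p.2, p.1) (q.2, q.1)

end

open Matrix

/-! Compatibility of `{X, F}` says `F₁₂ X₂₃ F₁₂⁻¹ = F₂₃⁻¹ X₁₂ F₂₃` (and the same with `F` and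
`F⁻¹` exchanged). One half of skew invertibility gives `Tr₁(C₁ X₁₂) = I`, hence
`Tr₁(C₁ F₁₂ X₂₃ F₁₂⁻¹) = F₂₃⁻¹ F₂₃ = I`. As `C` and `F` have scalar entries,
`Tr₁(C₁ F₁₂ M₂ F₁₂⁻¹)_{mm'} = ∑ K_{mm'}^{vt} M_{vt}` with scalar coefficients `K`; the previous
identity says that `K` contracted against `X` is `δ_{mm'} I`, and contracting once more against
`Ψ` (the other half, `Tr₂(X₁₂ Ψ₂₃) = P₁₃`) gives `K_{mm'}^{vt} = δ_{mm'} C_{tv}`. -/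

theorem mul_mul_eq_of_mul_mul_eq {M : Type*} [Monoid M] {x y u u' v v' : M}
    (hu : u' * u = 1) (hv : v * v' = 1) (h : x * u * v = u * v * y) :
    v * y * v' = u' * x * u := by
  calc v * y * v' = u' * (u * v * y) * v' := by simp only [← mul_assoc, hu, one_mul]
    _ = u' * x * u := by rw [← h]; simp only [mul_assoc, hv, mul_one]

theorem Finset.sum_comm₄ {α β γ δ M : Type*} [Fintype α] [Fintype β] [Fintype γ] [Fintype δ]
    [AddCommMonoid M] (f : α → β → γ → δ → M) :
    ∑ a, ∑ b, ∑ c, ∑ d, f a b c d = ∑ c, ∑ d, ∑ a, ∑ b, f a b c d := by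
  calc ∑ a, ∑ b, ∑ c, ∑ d, f a b c d = ∑ x : α × β, ∑ y : γ × δ, f x.1 x.2 y.1 y.2 := by
        simp only [Fintype.sum_prod_type]
    _ = ∑ y : γ × δ, ∑ x : α × β, f x.1 x.2 y.1 y.2 := Finset.sum_comm
    _ = ∑ c, ∑ d, ∑ a, ∑ b, f a b c d := by simp only [Fintype.sum_prod_type]

section Ring

variable {N : ℕ} {R : Type} [Ring R]

theorem leg12_mul (A B : TwoLeg N R) : leg12 (A * B) = leg12 A * leg12 B := by
  ext p q
  simp [leg12, Matrix.mul_apply, Fintype.sum_prod_type]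

theorem leg23_mul (A B : TwoLeg N R) : leg23 (A * B) = leg23 A * leg23 B := by
  ext p q
  simp [leg23, Matrix.mul_apply, Fintype.sum_prod_type]

theorem leg12_one : leg12 (1 : TwoLeg N R) = 1 := by
  ext p q
  simp only [leg12, Matrix.one_apply, Prod.ext_iff]
  split_ifs <;> simp_all

theorem leg23_one : leg23 (1 : TwoLeg N R) = 1 := by
  ext p q
  simp [leg23, Matrix.one_apply, Prod.ext_iff, ite_and]

theorem ptrMid_leg12_mul_leg23_apply (A B : TwoLeg N R) (i j i' j' : Fin N) :
    ptrMid (leg12 A * leg23 B) (i, j) (i', j') =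
      ∑ k, ∑ b, A (i, k) (i', b) * B (b, j) (k, j') := by
  simp [ptrMid, Matrix.mul_apply, leg12, leg23, Fintype.sum_prod_type]

theorem leg23_mul_apply (A : TwoLeg N R) (Y : ThreeLeg N R) (j : Fin N) (p : Fin N × Fin N)
    (r : Fin N × Fin N × Fin N) : (leg23 A * Y) (j, p) r = ∑ x, A p x * Y (j, x) r := by
  simp [leg23, Matrix.mul_apply, Fintype.sum_prod_type]

theorem mul_leg23_apply (B : TwoLeg N R) (Y : ThreeLeg N R) (i : Fin N) (q : Fin N × Fin N)
    (r : Fin N × Fin N × Fin N) : (Y * leg23 B) r (i, q) = ∑ x, Y r (i, x) * B x q := by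
  simp [leg23, Matrix.mul_apply, Fintype.sum_prod_type]

/-- `Tr₁(C₁ Y)`. -/
def ptrFirstMul (C : Matrix (Fin N) (Fin N) R) (Y : ThreeLeg N R) : TwoLeg N R :=
  fun p q => ∑ i, ∑ j, C i j * Y (j, p.1, p.2) (i, q.1, q.2)

theorem ptrFirstMul_trLeg1_leg12 {X Ψ : TwoLeg N R}
    (h : ptrMid (leg12 Ψ * leg23 X) = permP N R) : ptrFirstMul (trLeg1 Ψ) (leg12 X) = 1 := by
  ext ⟨a, u⟩ ⟨c, w⟩
  have hk (k : Fin N) :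
      ∑ i, ∑ j, Ψ (k, i) (k, j) * X (j, a) (i, c) = if k = c ∧ a = k then 1 else 0 := by
    rw [← ptrMid_leg12_mul_leg23_apply, h, permP]
  calc ptrFirstMul (trLeg1 Ψ) (leg12 X) (a, u) (c, w)
      = (∑ k, ∑ i, ∑ j, Ψ (k, i) (k, j) * X (j, a) (i, c)) * if u = w then 1 else 0 := by
        simp only [ptrFirstMul, leg12, trLeg1, Finset.sum_mul, ← mul_assoc]
        exact Finset.sum_comm_cycle
    _ = (1 : TwoLeg N R) (a, u) (c, w) := by
        simp only [hk, Matrix.one_apply, Prod.ext_iff]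
        rw [Finset.sum_eq_single c (by grind) (by simp)]
        grind

/-- `sandwichCoeff C G H m m' v t` is the entry `(m, m')` of `Tr₁(C₁ G₁₂ (E_{vt})₂ H₁₂)`, for the
matrix unit `E_{vt}`. -/
def sandwichCoeff (C : Matrix (Fin N) (Fin N) R) (G H : TwoLeg N R) (m m' v t : Fin N) : R :=
  ∑ i, ∑ j, ∑ s, C i j * G (j, m) (s, v) * H (s, t) (i, m')

end Ring

section CommRing

variable {N : ℕ} {S : Type} [CommRing S]

theorem ptrFirstMul_leg23_mul_mul_leg23 (C : Matrix (Fin N) (Fin N) S) (A B : TwoLeg N S)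
    (Y : ThreeLeg N S) : ptrFirstMul C (leg23 A * Y * leg23 B) = A * ptrFirstMul C Y * B := by
  ext p q
  calc ptrFirstMul C (leg23 A * Y * leg23 B) p q
      = ∑ i, ∑ j, ∑ y, ∑ x, C i j * (A p x * Y (j, x) (i, y) * B y q) := by
        simp only [ptrFirstMul, mul_leg23_apply, leg23_mul_apply, Finset.sum_mul, Finset.mul_sum,
          Prod.mk.eta]
    _ = ∑ y, ∑ x, ∑ i, ∑ j, C i j * (A p x * Y (j, x) (i, y) * B y q) := Finset.sum_comm₄ _
    _ = (A * ptrFirstMul C Y * B) p q := by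
        simp only [ptrFirstMul, Matrix.mul_apply, Finset.sum_mul, Finset.mul_sum, Prod.mk.eta]
        ac_rfl

theorem ptrFirstMul_leg12_mul_leg23_mul_leg12_apply (C : Matrix (Fin N) (Fin N) S)
    (G X H : TwoLeg N S) (m u m' w : Fin N) :
    ptrFirstMul C (leg12 G * leg23 X * leg12 H) (m, u) (m', w) =
      ∑ t, ∑ v, sandwichCoeff C G H m m' v t * X (v, u) (t, w) := by
  calc ptrFirstMul C (leg12 G * leg23 X * leg12 H) (m, u) (m', w)
      = ∑ i, ∑ j, ∑ s, ∑ t, ∑ v,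
          C i j * (G (j, m) (s, v) * X (v, u) (t, w) * H (s, t) (i, m')) := by
        simp [ptrFirstMul, leg12, leg23, Matrix.mul_apply, Fintype.sum_prod_type, Finset.sum_mul,
          Finset.mul_sum]
    _ = ∑ i, ∑ j, ∑ t, ∑ v, ∑ s,
          C i j * (G (j, m) (s, v) * X (v, u) (t, w) * H (s, t) (i, m')) :=
        Finset.sum_congr rfl fun _ _ => Finset.sum_congr rfl fun _ _ => Finset.sum_comm_cycle.symm
    _ = ∑ t, ∑ v, ∑ i, ∑ j, ∑ s,
          C i j * (G (j, m) (s, v) * X (v, u) (t, w) * H (s, t) (i, m')) :=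
        Finset.sum_comm₄ _
    _ = ∑ t, ∑ v, sandwichCoeff C G H m m' v t * X (v, u) (t, w) := by
        simp only [sandwichCoeff, Finset.sum_mul]
        ac_rfl

theorem trLeg1_leg1_mul_mul_leg2_mul_apply {W : Type} [Ring W] [Algebra S W]
    (C : Matrix (Fin N) (Fin N) S) (G H : TwoLeg N S) (M : Matrix (Fin N) (Fin N) W)
    (m m' : Fin N) :
    trLeg1 (leg1 (C.map (algebraMap S W)) * G.map (algebraMap S W) * leg2 M *
        H.map (algebraMap S W)) m m' =
      ∑ t, ∑ v, algebraMap S W (sandwichCoeff C G H m m' v t) * M v t := by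
  have hcomm (a b c : S) (x : W) : algebraMap S W a * algebraMap S W b * x * algebraMap S W c =
      algebraMap S W (a * b * c) * x := by
    rw [mul_assoc _ x, ← Algebra.commutes c x]
    simp only [map_mul, mul_assoc]
  calc trLeg1 (leg1 (C.map (algebraMap S W)) * G.map (algebraMap S W) * leg2 M *
        H.map (algebraMap S W)) m m'
      = ∑ i, ∑ s, ∑ t, ∑ v, ∑ j,
          algebraMap S W (C i j * G (j, m) (s, v) * H (s, t) (i, m')) * M v t := by
        simp [trLeg1, leg1, leg2, Matrix.mul_apply, Fintype.sum_prod_type, Finset.sum_mul, hcomm]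
    _ = ∑ t, ∑ v, ∑ i, ∑ s, ∑ j,
          algebraMap S W (C i j * G (j, m) (s, v) * H (s, t) (i, m')) * M v t :=
        Finset.sum_comm₄ _
    _ = ∑ t, ∑ v, algebraMap S W (sandwichCoeff C G H m m' v t) * M v t := by
        simp only [sandwichCoeff, map_sum, Finset.sum_mul]
        exact Finset.sum_congr rfl fun _ _ => Finset.sum_congr rfl fun _ _ =>
          Finset.sum_congr rfl fun _ _ => Finset.sum_comm

variable {X Ψ G H : TwoLeg N S}

theorem sandwichCoeff_trLeg1_eq (hXΨ : ptrMid (leg12 X * leg23 Ψ) = permP N S)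
    (hΨX : ptrMid (leg12 Ψ * leg23 X) = permP N S)
    (hconj : leg12 G * leg23 X * leg12 H = leg23 H * leg12 X * leg23 G) (hHG : H * G = 1)
    (m m' v t : Fin N) :
    sandwichCoeff (trLeg1 Ψ) G H m m' v t = if m = m' then trLeg1 Ψ t v else 0 := by
  set K := sandwichCoeff (trLeg1 Ψ) G H m m'
  have hKX (u w : Fin N) :
      ∑ t', ∑ v', K v' t' * X (v', u) (t', w) = if m = m' ∧ u = w then 1 else 0 := by
    rw [← ptrFirstMul_leg12_mul_leg23_mul_leg12_apply, hconj, ptrFirstMul_leg23_mul_mul_leg23,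
      ptrFirstMul_trLeg1_leg12 hΨX, mul_one, hHG, Matrix.one_apply]
    simp only [Prod.mk.injEq]
  have hXΨ' (v' t' : Fin N) :
      ∑ b, ∑ c, X (v', b) (t', c) * Ψ (c, t) (b, v) = if v' = v ∧ t = t' then 1 else 0 := by
    rw [← ptrMid_leg12_mul_leg23_apply, hXΨ, permP]
  calc K v t = ∑ t', ∑ v', K v' t' * if v' = v ∧ t = t' then 1 else 0 := by
        simp [ite_and]
    _ = ∑ t', ∑ v', K v' t' * ∑ b, ∑ c, X (v', b) (t', c) * Ψ (c, t) (b, v) := by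
        simp only [hXΨ']
    _ = ∑ b, ∑ c, (∑ t', ∑ v', K v' t' * X (v', b) (t', c)) * Ψ (c, t) (b, v) := by
        simp only [Finset.mul_sum, Finset.sum_mul, mul_assoc]
        exact Finset.sum_comm₄ _
    _ = ∑ b, ∑ c, (if m = m' ∧ b = c then 1 else 0) * Ψ (c, t) (b, v) := by
        simp only [hKX]
    _ = if m = m' then trLeg1 Ψ t v else 0 := by
        split_ifs <;> simp [*, trLeg1]

theorem trLeg1_leg1_mul_conj_leg2_eq_diagonal {W : Type} [Ring W] [Algebra S W]
    (hXΨ : ptrMid (leg12 X * leg23 Ψ) = permP N S)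
    (hΨX : ptrMid (leg12 Ψ * leg23 X) = permP N S)
    (hconj : leg12 G * leg23 X * leg12 H = leg23 H * leg12 X * leg23 G) (hHG : H * G = 1)
    (M : Matrix (Fin N) (Fin N) W) :
    trLeg1 (leg1 ((trLeg1 Ψ).map (algebraMap S W)) * G.map (algebraMap S W) * leg2 M *
        H.map (algebraMap S W)) =
      Matrix.diagonal (fun _ => Matrix.trace ((trLeg1 Ψ).map (algebraMap S W) * M)) := by
  ext m m'
  rw [trLeg1_leg1_mul_mul_leg2_mul_apply]
  simp only [sandwichCoeff_trLeg1_eq hXΨ hΨX hconj hHG]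
  rcases eq_or_ne m m' with rfl | hm
  · simp [Matrix.trace, Matrix.mul_apply]
  · simp [hm]

end CommRing

/-- Lemma 3.2: for a compatible pair `{X,F}` with `X` skew invertible and
`C_X = Tr₁(Ψ_X)`, for any matrix `M` with entries in an algebra `W`:
`Tr₁((C_X)₁ F₁₂^ε M₂ F₁₂^{-ε}) = I₂ · tr(C_X M)` for `ε = ±1`. -/
theorem compatible_pair_trace_formula
    {N : ℕ} {W : Type} [Ring W] [Algebra ℂ W]
    (X ΨX F Finv : TwoLeg N ℂ)
    (hX : IsSkewInverse X ΨX)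
    (hFinv : F * Finv = 1 ∧ Finv * F = 1)
    (hcomp : IsCompatiblePair X F)
    (M : Matrix (Fin N) (Fin N) W) :
    trLeg1 (leg1 ((trLeg1 ΨX).map (algebraMap ℂ W)) * F.map (algebraMap ℂ W) *
        leg2 M * Finv.map (algebraMap ℂ W)) =
      Matrix.diagonal (fun _ => Matrix.trace ((trLeg1 ΨX).map (algebraMap ℂ W) * M)) ∧
    trLeg1 (leg1 ((trLeg1 ΨX).map (algebraMap ℂ W)) * Finv.map (algebraMap ℂ W) *
        leg2 M * F.map (algebraMap ℂ W)) =
      Matrix.diagonal (fun _ => Matrix.trace ((trLeg1 ΨX).map (algebraMap ℂ W) * M)) := by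
  obtain ⟨hFFinv, hFinvF⟩ := hFinv
  have leg12_inv {A B : TwoLeg N ℂ} (h : A * B = 1) : leg12 A * leg12 B = 1 := by
    rw [← leg12_mul, h, leg12_one]
  have leg23_inv {A B : TwoLeg N ℂ} (h : A * B = 1) : leg23 A * leg23 B = 1 := by
    rw [← leg23_mul, h, leg23_one]
  have hconjF := mul_mul_eq_of_mul_mul_eq (leg23_inv hFinvF) (leg12_inv hFFinv) hcomp.1
  have hconjFinv := (mul_mul_eq_of_mul_mul_eq (leg12_inv hFinvF) (leg23_inv hFFinv) hcomp.2).symm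
  exact ⟨trLeg1_leg1_mul_conj_leg2_eq_diagonal hX.1 hX.2 hconjF hFinvF M,
    trLeg1_leg1_mul_conj_leg2_eq_diagonal hX.1 hX.2 hconjFinv hFFinv M⟩
end

section
/- Let {X,F} be a compatible pair of skew invertible operators on V⊗V. Then (C_X)₁ (Ψ_F)₁₂ = F₂₁^{-1} (C_X)₂ and (Ψ_F)₁₂ (D_X)₂ = (D_X)₁ F₂₁^{-1}, where C_X := Tr₁(Ψ_X)₁₂ and D_X := Tr₂(Ψ_X)₁₂. -/
/-
Realigning index pairs, `Aᴿ (i, k) (a, b) = A (i, b) (k, a)` (`realign`), turns the contraction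
`Tr₂(A₁₂ B₂₃)` into the matrix product `Aᴿ Bᴿ`, and `Pᴿ = 1`; so `Ψ` is a skew inverse of `X`
exactly when `Ψᴿ` is the inverse of `Xᴿ`.

Conjugating the compatibility relation gives `F₂⁻¹ X₁ F₂ = F₁ X₂ F₁⁻¹`. Contracting both sides with
`C = C_X` on the first leg erases `X₁`, because `Tr₁(C₁ X₁₂) = I`; contracting them further with
`Ψ_X` replaces `X₂₃` by a permutation. What remains is `Tr₁(C₁ F₁₂ F⁻¹₁₃) P₂₃ = C₂`, which after
realignment reads `(F₂₁⁻¹)ᴿ C₁ Fᴿ = C₁`; multiplying on the right by `Ψ_Fᴿ = (Fᴿ)⁻¹` gives the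
first relation. The second relation is the first one for the images under `A ↦ (P A P)ᵀ`
(`reverseTranspose`), an anti-automorphism that reverses the order of the legs, preserves every
hypothesis and sends `C_X` to `D_Xᵀ`.
-/

open Matrix

section Realign

variable {N : ℕ} {R : Type}

def realign (A : TwoLeg N R) : TwoLeg N R := fun p q => A (p.1, q.2) (p.2, q.1)

theorem realign_injective : Function.Injective (realign : TwoLeg N R → TwoLeg N R) := by
  intro A B h
  ext p q
  simpa [realign] using congrFun (congrFun h (p.1, q.1)) (q.2, p.2)

variable [Ring R]

theorem realign_ptrMid (A B : TwoLeg N R) :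
    realign (ptrMid (leg12 A * leg23 B)) = realign A * realign B := by
  ext p q
  simp only [realign, ptrMid, Matrix.mul_apply, leg12, leg23, mul_ite, mul_one, mul_zero, ite_mul,
    zero_mul, Prod.mk.eta, Fintype.sum_prod_type, Finset.sum_ite_irrel, Finset.sum_ite_eq,
    Finset.sum_ite_eq', Finset.mem_univ, ↓reduceIte, Finset.sum_const_zero]
  exact Finset.sum_comm

theorem realign_permP : realign (permP N R) = 1 := by
  ext p q
  simp [realign, permP, Matrix.one_apply, Prod.ext_iff, eq_comm]

theorem realign_leg1_mul (C : Matrix (Fin N) (Fin N) R) (A : TwoLeg N R) :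
    realign (leg1 C * A) = leg1 C * realign A := by
  ext p q
  simp [realign, leg1, Matrix.mul_apply, Fintype.sum_prod_type]

theorem realign_mul_leg2 (A : TwoLeg N R) (C : Matrix (Fin N) (Fin N) R) :
    realign (A * leg2 C) = realign A * leg1 C := by
  ext p q
  simp [realign, leg1, leg2, Matrix.mul_apply, Fintype.sum_prod_type]

theorem realign_mul_realign_eq_one {A B : TwoLeg N R}
    (h : ptrMid (leg12 A * leg23 B) = permP N R) : realign A * realign B = 1 := by
  rw [← realign_ptrMid, h, realign_permP]

end Realign

section Legs

variable {N : ℕ} {R : Type} [Ring R]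

theorem leg1_one : leg1 (1 : Matrix (Fin N) (Fin N) R) = 1 := by
  ext p q
  simp only [leg1, Matrix.one_apply, Prod.ext_iff]
  split_ifs <;> simp_all

theorem ptrMid_leg23 (A : TwoLeg N R) : ptrMid (leg23 A) = leg2 (trLeg1 A) := by
  ext p q
  simp [ptrMid, leg23, leg2, trLeg1]

theorem trLeg1_permP : trLeg1 (permP N R) = 1 := by
  ext i j
  simp [trLeg1, permP, Matrix.one_apply, ite_and, eq_comm]

theorem swapLegs_mul (A B : TwoLeg N R) : swapLegs (A * B) = swapLegs A * swapLegs B := by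
  ext p q
  simp only [swapLegs, Matrix.mul_apply]
  exact Fintype.sum_equiv (Equiv.prodComm _ _) _ _ fun _ => rfl

theorem swapLegs_leg2 (C : Matrix (Fin N) (Fin N) R) : swapLegs (leg2 C) = leg1 C := rfl

theorem swapLegs_permP : swapLegs (permP N R) = permP N R := by
  ext p q
  simp [swapLegs, permP, and_comm]

theorem permP_mul_permP : permP N R * permP N R = 1 := by
  ext p q
  simp [permP, Matrix.mul_apply, Matrix.one_apply, Fintype.sum_prod_type, Prod.ext_iff, ite_and]

theorem trLeg1_ptrMid (A B : TwoLeg N R) :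
    trLeg1 (ptrMid (leg12 A * leg23 B)) = trLeg1 (leg1 (trLeg1 A) * B) := by
  ext i j
  simp only [trLeg1, ptrMid, Matrix.mul_apply, leg12, leg23, leg1, mul_ite, mul_one, mul_zero,
    ite_mul, zero_mul, Prod.mk.eta, Fintype.sum_prod_type, Finset.sum_ite_irrel, Finset.sum_ite_eq,
    Finset.sum_ite_eq', Finset.mem_univ, ↓reduceIte, Finset.sum_const_zero, Finset.sum_mul]
  exact Finset.sum_comm_cycle.symm

theorem trLeg1_leg1_trLeg1_mul {X Ψ : TwoLeg N R} (h : ptrMid (leg12 Ψ * leg23 X) = permP N R) :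
    trLeg1 (leg1 (trLeg1 Ψ) * X) = 1 := by
  rw [← trLeg1_ptrMid, h, trLeg1_permP]

end Legs

section Contraction

variable {N : ℕ} {R : Type}

section

variable [Ring R]

/-- `Tr₁(C₁ Y)`. -/
def ptrFirstWeighted (C : Matrix (Fin N) (Fin N) R) (Y : ThreeLeg N R) : TwoLeg N R :=
  fun p q => ∑ i, ∑ l, C l i * Y (i, p) (l, q)

theorem ptrFirstWeighted_leg12 (C : Matrix (Fin N) (Fin N) R) (X : TwoLeg N R) :
    ptrFirstWeighted C (leg12 X) = leg1 (trLeg1 (leg1 C * X)) := by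
  ext p q
  simp only [ptrFirstWeighted, leg12, leg1, trLeg1, Matrix.mul_apply, mul_ite, mul_one, mul_zero,
    ite_mul, zero_mul, Fintype.sum_prod_type, Finset.sum_ite_irrel, Finset.sum_const_zero,
    Finset.sum_ite_eq, Finset.mem_univ, ↓reduceIte]
  rw [Finset.sum_comm]

end

variable [CommRing R]

theorem ptrFirstWeighted_leg23_mul (C : Matrix (Fin N) (Fin N) R) (A : TwoLeg N R)
    (Y : ThreeLeg N R) : ptrFirstWeighted C (leg23 A * Y) = A * ptrFirstWeighted C Y := by
  ext p q
  simp only [ptrFirstWeighted, Matrix.mul_apply, leg23, Prod.mk.eta, mul_ite, mul_one, mul_zero,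
    ite_mul, zero_mul, Fintype.sum_prod_type, Finset.sum_ite_irrel, Finset.sum_const_zero,
    Finset.sum_ite_eq, Finset.mem_univ, ↓reduceIte, Finset.mul_sum]
  simp only [← Fintype.sum_prod_type']
  exact Fintype.sum_equiv ⟨fun ⟨i, l, a, b⟩ => (a, b, i, l), fun ⟨a, b, i, l⟩ => (i, l, a, b),
    fun _ => rfl, fun _ => rfl⟩ _ _ fun _ => by dsimp only [Equiv.coe_fn_mk]; ring

theorem ptrFirstWeighted_mul_leg23 (C : Matrix (Fin N) (Fin N) R) (Y : ThreeLeg N R)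
    (B : TwoLeg N R) : ptrFirstWeighted C (Y * leg23 B) = ptrFirstWeighted C Y * B := by
  ext p q
  simp only [ptrFirstWeighted, Matrix.mul_apply, leg23, Prod.mk.eta, mul_ite, mul_one, mul_zero,
    Fintype.sum_prod_type, Finset.sum_ite_irrel, Finset.sum_const_zero, Finset.sum_ite_eq',
    Finset.mem_univ, ↓reduceIte, Finset.mul_sum, Finset.sum_mul]
  simp only [← Fintype.sum_prod_type']
  exact Fintype.sum_equiv ⟨fun ⟨i, l, a, b⟩ => (a, b, i, l), fun ⟨a, b, i, l⟩ => (i, l, a, b),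
    fun _ => rfl, fun _ => rfl⟩ _ _ fun _ => by dsimp only [Equiv.coe_fn_mk]; ring

theorem ptrFirstWeighted_leg12_mul_leg23_mul_leg12 (C : Matrix (Fin N) (Fin N) R)
    (A X B : TwoLeg N R) :
    ptrFirstWeighted C (leg12 A * leg23 X * leg12 B)
      = ptrMid (leg12 (ptrFirstWeighted C (leg12 A * leg13 B) * permP N R) * leg23 X) := by
  ext p q
  simp only [ptrFirstWeighted, ptrMid, Matrix.mul_apply, leg12, leg23, leg13, permP, ite_and,
    mul_ite, mul_one, mul_zero, ite_mul, zero_mul, Prod.mk.eta, Fintype.sum_prod_type,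
    Finset.sum_ite_irrel, Finset.sum_ite_eq, Finset.sum_ite_eq', Finset.mem_univ, ↓reduceIte,
    Finset.sum_const_zero, Finset.sum_mul, Finset.mul_sum]
  simp only [← Fintype.sum_prod_type']
  exact Fintype.sum_equiv ⟨fun ⟨i, l, d, e, b⟩ => (e, b, i, l, d),
    fun ⟨e, b, i, l, d⟩ => (i, l, d, e, b), fun _ => rfl, fun _ => rfl⟩ _ _
    fun _ => by dsimp only [Equiv.coe_fn_mk]; ring

theorem realign_swapLegs_ptrFirstWeighted (C : Matrix (Fin N) (Fin N) R) (A B : TwoLeg N R) :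
    realign (swapLegs (ptrFirstWeighted C (leg12 A * leg13 B)))
      = realign (swapLegs B) * leg1 C * realign A := by
  ext p q
  simp only [realign, swapLegs, ptrFirstWeighted, Matrix.mul_apply, leg12, leg13, leg1, mul_ite,
    mul_one, mul_zero, ite_mul, zero_mul, Fintype.sum_prod_type, Finset.sum_ite_irrel,
    Finset.sum_ite_eq, Finset.sum_ite_eq', Finset.mem_univ, ↓reduceIte, Finset.sum_const_zero,
    Finset.mul_sum, Finset.sum_mul]
  simp only [← Fintype.sum_prod_type']
  exact Fintype.sum_equiv ⟨fun ⟨i, l, d⟩ => (i, d, l), fun ⟨i, d, l⟩ => (i, l, d),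
    fun _ => rfl, fun _ => rfl⟩ _ _ fun _ => by dsimp only [Equiv.coe_fn_mk]; ring

end Contraction

theorem mul_mul_eq_of_mul_mul_eq_s15 {M : Type*} [Monoid M] {x y f₁ f₂ g₁ g₂ : M}
    (h : x * f₂ * f₁ = f₂ * f₁ * y) (h₁ : f₁ * g₁ = 1) (h₂ : g₂ * f₂ = 1) :
    g₂ * x * f₂ = f₁ * y * g₁ := by
  calc g₂ * x * f₂ = g₂ * (x * f₂ * f₁) * g₁ := by simp only [mul_assoc, h₁, mul_one]
    _ = f₁ * y * g₁ := by rw [h]; simp only [← mul_assoc, h₂, one_mul]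

section FirstRelation

variable {N : ℕ} {R : Type} [CommRing R]

theorem ptrFirstWeighted_leg12_mul_leg13_mul_permP {X ΨX F Finv : TwoLeg N R}
    (hX : IsSkewInverse X ΨX) (hFinv : F * Finv = 1) (hFinv' : Finv * F = 1)
    (hXF : leg12 X * leg23 F * leg12 F = leg23 F * leg12 F * leg23 X) :
    ptrFirstWeighted (trLeg1 ΨX) (leg12 F * leg13 Finv) * permP N R = leg2 (trLeg1 ΨX) := by
  set W := ptrFirstWeighted (trLeg1 ΨX) (leg12 F * leg13 Finv) * permP N R
  have hconj : leg12 F * leg23 X * leg12 Finv = leg23 Finv * leg12 X * leg23 F :=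
    (mul_mul_eq_of_mul_mul_eq_s15 hXF (by rw [← leg12_mul, hFinv, leg12_one])
      (by rw [← leg23_mul, hFinv', leg23_one])).symm
  have hW : ptrMid (leg12 W * leg23 X) = 1 := by
    rw [← ptrFirstWeighted_leg12_mul_leg23_mul_leg12, hconj, ptrFirstWeighted_mul_leg23,
      ptrFirstWeighted_leg23_mul, ptrFirstWeighted_leg12, trLeg1_leg1_trLeg1_mul hX.2, leg1_one,
      mul_one, hFinv']
  have hXΨ : realign X * realign ΨX = 1 := realign_mul_realign_eq_one hX.1
  apply realign_injective
  calc realign W = realign (ptrMid (leg12 W * leg23 X)) * realign ΨX := by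
        rw [realign_ptrMid, mul_assoc, hXΨ, mul_one]
    _ = realign (leg2 (trLeg1 ΨX)) := by
        rw [hW, ← realign_ptrMid, leg12_one, one_mul, ptrMid_leg23]

theorem leg1_trLeg1_mul_eq_swapLegs_mul_leg2 {X ΨX F ΨF Finv : TwoLeg N R}
    (hX : IsSkewInverse X ΨX) (hF : ptrMid (leg12 F * leg23 ΨF) = permP N R)
    (hFinv : F * Finv = 1) (hFinv' : Finv * F = 1)
    (hXF : leg12 X * leg23 F * leg12 F = leg23 F * leg12 F * leg23 X) :
    leg1 (trLeg1 ΨX) * ΨF = swapLegs Finv * leg2 (trLeg1 ΨX) := by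
  set C := trLeg1 ΨX
  have hW : ptrFirstWeighted C (leg12 F * leg13 Finv) = leg2 C * permP N R := by
    rw [← ptrFirstWeighted_leg12_mul_leg13_mul_permP hX hFinv hFinv' hXF, mul_assoc,
      permP_mul_permP, mul_one]
  have hM : realign (swapLegs Finv) * leg1 C * realign F = leg1 C := by
    rw [← realign_swapLegs_ptrFirstWeighted, hW, swapLegs_mul, swapLegs_leg2, swapLegs_permP,
      realign_leg1_mul, realign_permP, mul_one]
  apply realign_injective
  calc realign (leg1 C * ΨF) = realign (swapLegs Finv) * leg1 C * realign F * realign ΨF := by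
        rw [hM, realign_leg1_mul]
    _ = realign (swapLegs Finv * leg2 C) := by
        rw [mul_assoc, realign_mul_realign_eq_one hF, mul_one, realign_mul_leg2]

end FirstRelation

section ReverseTranspose

variable {N : ℕ} {R : Type}

def reverseTranspose (A : TwoLeg N R) : TwoLeg N R := fun p q => A q.swap p.swap

def reverseTranspose3 (Y : ThreeLeg N R) : ThreeLeg N R :=
  fun p q => Y (q.2.2, q.2.1, q.1) (p.2.2, p.2.1, p.1)

theorem reverseTranspose_injective :
    Function.Injective (reverseTranspose : TwoLeg N R → TwoLeg N R) := by
  intro A B h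
  ext p q
  simpa [reverseTranspose] using congrFun (congrFun h q.swap) p.swap

theorem realign_reverseTranspose (A : TwoLeg N R) :
    realign (reverseTranspose A) = (realign A)ᵀ := rfl

theorem reverseTranspose_swapLegs (A : TwoLeg N R) :
    reverseTranspose (swapLegs A) = swapLegs (reverseTranspose A) := rfl

section

variable [Ring R]

theorem trLeg1_reverseTranspose (A : TwoLeg N R) :
    trLeg1 (reverseTranspose A) = (trLeg2 A)ᵀ := rfl

theorem reverseTranspose_one : reverseTranspose (1 : TwoLeg N R) = 1 := by
  ext p q
  simp [reverseTranspose, Matrix.one_apply, eq_comm]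

theorem reverseTranspose_permP : reverseTranspose (permP N R) = permP N R := by
  ext p q
  simp [reverseTranspose, permP, eq_comm]

theorem reverseTranspose_leg1 (C : Matrix (Fin N) (Fin N) R) :
    reverseTranspose (leg1 C) = leg2 Cᵀ := by
  ext p q
  simp [reverseTranspose, leg1, leg2, eq_comm]

theorem reverseTranspose_leg2 (C : Matrix (Fin N) (Fin N) R) :
    reverseTranspose (leg2 C) = leg1 Cᵀ := by
  ext p q
  simp [reverseTranspose, leg1, leg2, eq_comm]

theorem reverseTranspose3_leg12 (A : TwoLeg N R) :
    reverseTranspose3 (leg12 A) = leg23 (reverseTranspose A) := by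
  ext p q
  simp [reverseTranspose3, reverseTranspose, leg12, leg23, Prod.swap, eq_comm]

theorem reverseTranspose3_leg23 (A : TwoLeg N R) :
    reverseTranspose3 (leg23 A) = leg12 (reverseTranspose A) := by
  ext p q
  simp [reverseTranspose3, reverseTranspose, leg12, leg23, Prod.swap, eq_comm]

end

variable [CommRing R]

theorem reverseTranspose_mul (A B : TwoLeg N R) :
    reverseTranspose (A * B) = reverseTranspose B * reverseTranspose A := by
  ext p q
  simp only [reverseTranspose, Matrix.mul_apply]
  exact Fintype.sum_equiv (Equiv.prodComm _ _) _ _ fun _ => mul_comm _ _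

theorem reverseTranspose3_mul (Y Z : ThreeLeg N R) :
    reverseTranspose3 (Y * Z) = reverseTranspose3 Z * reverseTranspose3 Y := by
  ext p q
  simp only [reverseTranspose3, Matrix.mul_apply]
  exact Fintype.sum_equiv ⟨fun r => (r.2.2, r.2.1, r.1), fun r => (r.2.2, r.2.1, r.1),
    fun _ => rfl, fun _ => rfl⟩ _ _ fun _ => mul_comm _ _

theorem ptrMid_reverseTranspose (A B : TwoLeg N R) :
    ptrMid (leg12 (reverseTranspose B) * leg23 (reverseTranspose A))
      = reverseTranspose (ptrMid (leg12 A * leg23 B)) := by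
  apply realign_injective
  simp only [realign_ptrMid, realign_reverseTranspose, Matrix.transpose_mul]

theorem IsSkewInverse.reverseTranspose {X Ψ : TwoLeg N R} (h : IsSkewInverse X Ψ) :
    IsSkewInverse (reverseTranspose X) (reverseTranspose Ψ) := by
  rw [IsSkewInverse, ptrMid_reverseTranspose, ptrMid_reverseTranspose, h.1, h.2,
    reverseTranspose_permP]
  exact ⟨rfl, rfl⟩

theorem leg12_mul_leg23_mul_leg12_reverseTranspose {X F : TwoLeg N R}
    (h : leg12 X * leg23 F * leg12 F = leg23 F * leg12 F * leg23 X) :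
    leg12 (reverseTranspose X) * leg23 (reverseTranspose F) * leg12 (reverseTranspose F)
      = leg23 (reverseTranspose F) * leg12 (reverseTranspose F) * leg23 (reverseTranspose X) := by
  simpa only [reverseTranspose3_mul, reverseTranspose3_leg12, reverseTranspose3_leg23,
    mul_assoc] using congrArg reverseTranspose3 h.symm

end ReverseTranspose

theorem mul_leg2_trLeg2_eq_leg1_mul_swapLegs {N : ℕ} {R : Type} [CommRing R]
    {X ΨX F ΨF Finv : TwoLeg N R}
    (hX : IsSkewInverse X ΨX) (hF : ptrMid (leg12 ΨF * leg23 F) = permP N R)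
    (hFinv : F * Finv = 1) (hFinv' : Finv * F = 1)
    (hXF : leg12 X * leg23 F * leg12 F = leg23 F * leg12 F * leg23 X) :
    ΨF * leg2 (trLeg2 ΨX) = leg1 (trLeg2 ΨX) * swapLegs Finv := by
  have h := leg1_trLeg1_mul_eq_swapLegs_mul_leg2 hX.reverseTranspose
    (by rw [ptrMid_reverseTranspose, hF, reverseTranspose_permP])
    (by rw [← reverseTranspose_mul, hFinv', reverseTranspose_one])
    (by rw [← reverseTranspose_mul, hFinv, reverseTranspose_one])
    (leg12_mul_leg23_mul_leg12_reverseTranspose hXF)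
  rw [trLeg1_reverseTranspose, ← reverseTranspose_leg2, ← reverseTranspose_leg1,
    ← reverseTranspose_swapLegs, ← reverseTranspose_mul, ← reverseTranspose_mul] at h
  exact reverseTranspose_injective h

/-- Lemma 3.3: for a compatible pair `{X,F}` of skew invertible operators,
`(C_X)₁ (Ψ_F)₁₂ = F₂₁⁻¹ (C_X)₂` and `(Ψ_F)₁₂ (D_X)₂ = (D_X)₁ F₂₁⁻¹`. -/
theorem skew_inverse_CD_relations
    {N : ℕ} (X ΨX F ΨF Finv : TwoLeg N ℂ)
    (hX : IsSkewInverse X ΨX) (hF : IsSkewInverse F ΨF)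
    (hFinv : F * Finv = 1 ∧ Finv * F = 1)
    (hcomp : IsCompatiblePair X F) :
    leg1 (trLeg1 ΨX) * ΨF = swapLegs Finv * leg2 (trLeg1 ΨX) ∧
    ΨF * leg2 (trLeg2 ΨX) = leg1 (trLeg2 ΨX) * swapLegs Finv :=
  ⟨leg1_trLeg1_mul_eq_swapLegs_mul_leg2 hX hF.1 hFinv.1 hFinv.2 hcomp.1,
    mul_leg2_trLeg2_eq_leg1_mul_swapLegs hX hF.2 hFinv.1 hFinv.2 hcomp.1⟩
end

section
/- Let R be a skew invertible R-matrix of BMW type on V⊗V with associated rank-one operator K and matrix D_R. Then K₁₂ (D_R)₁ (D_R)₂ = (D_R)₁ (D_R)₂ K₁₂ = μ² K₁₂. -/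
open Module

theorem LinearMap.exists_comp_eq_smul_of_commute_of_finrank_range_eq_one
    {K V : Type*} [Field K] [AddCommGroup V] [Module K V] {f g : V →ₗ[K] V}
    (hf : finrank K (range f) = 1) (hfg : Commute f g) : ∃ c : K, g ∘ₗ f = c • f := by
  have hmaps : ∀ x ∈ range f, g x ∈ range f := by
    rintro _ ⟨y, rfl⟩
    exact ⟨g y, LinearMap.congr_fun hfg y⟩
  obtain ⟨c, hc, -⟩ := (g.restrict hmaps).existsUnique_eq_smul_id_of_finrank_eq_one hf
  refine ⟨c, LinearMap.ext fun x => ?_⟩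
  simpa using congr_arg Subtype.val (LinearMap.congr_fun hc ⟨f x, mem_range_self f x⟩)

theorem Matrix.exists_mul_eq_smul_of_commute_of_rank_eq_one
    {K n : Type*} [Field K] [Fintype n] [DecidableEq n] {A X : Matrix n n K}
    (hA : A.rank = 1) (hAX : Commute A X) : ∃ c : K, X * A = c • A := by
  obtain ⟨c, hc⟩ := LinearMap.exists_comp_eq_smul_of_commute_of_finrank_range_eq_one hA
    (hAX.map Matrix.toLinAlgEquiv')
  exact ⟨c, Matrix.toLinAlgEquiv'.injective (by rw [map_mul, map_smul]; exact hc)⟩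

section Ring

variable {N : ℕ} {R : Type} [Ring R]

@[simp]
theorem leg2_zero : leg2 (0 : Matrix (Fin N) (Fin N) R) = 0 := by
  ext p q
  simp [leg2]

@[simp]
theorem trLeg2_zero : trLeg2 (0 : TwoLeg N R) = 0 := by
  ext i j
  simp [trLeg2]

theorem trLeg2_smul (c : R) (M : TwoLeg N R) :
    trLeg2 (c • M) = c • trLeg2 M := by
  ext i j
  simp [trLeg2, Finset.mul_sum]

theorem mul_leg1_apply (M : TwoLeg N R) (C : Matrix (Fin N) (Fin N) R)
    (p : Fin N × Fin N) (k l : Fin N) :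
    (M * leg1 C) p (k, l) = ∑ m, M p (m, l) * C m k := by
  simp [Matrix.mul_apply, leg1, Fintype.sum_prod_type]

theorem mul_leg2_apply (M : TwoLeg N R) (C : Matrix (Fin N) (Fin N) R)
    (p : Fin N × Fin N) (k l : Fin N) :
    (M * leg2 C) p (k, l) = ∑ m, M p (k, m) * C m l := by
  simp [Matrix.mul_apply, leg2, Fintype.sum_prod_type]

theorem leg2_mul_apply (M : TwoLeg N R) (C : Matrix (Fin N) (Fin N) R)
    (i j : Fin N) (r : Fin N × Fin N) :
    (leg2 C * M) (i, j) r = ∑ m, C j m * M (i, m) r := by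
  simp [Matrix.mul_apply, leg2, Fintype.sum_prod_type]

theorem trLeg2_mul_leg1 (M : TwoLeg N R) (C : Matrix (Fin N) (Fin N) R) :
    trLeg2 (M * leg1 C) = trLeg2 M * C := by
  ext i k
  simp only [trLeg2, mul_leg1_apply]
  simp only [Matrix.mul_apply, trLeg2, Finset.sum_mul]
  exact Finset.sum_comm

end Ring

section CommRing

variable {N : ℕ} {R : Type} [CommRing R]

theorem commute_leg1_leg2 (C C' : Matrix (Fin N) (Fin N) R) :
    Commute (leg1 C) (leg2 C') := by
  ext ⟨i, j⟩ ⟨k, l⟩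
  simp [Matrix.mul_apply, leg1, leg2, Fintype.sum_prod_type, mul_ite, mul_comm]

theorem trLeg2_mul_leg2 (M : TwoLeg N R) (C : Matrix (Fin N) (Fin N) R) :
    trLeg2 (M * leg2 C) = trLeg2 (leg2 C * M) := by
  ext i k
  simp only [trLeg2, mul_leg2_apply, leg2_mul_apply]
  rw [Finset.sum_comm]
  simp only [mul_comm]

theorem trLeg2_mul_leg1_mul_leg2 (M : TwoLeg N R)
    (C C' : Matrix (Fin N) (Fin N) R) :
    trLeg2 (M * (leg1 C * leg2 C')) = trLeg2 (leg2 C' * M) * C := by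
  rw [(commute_leg1_leg2 C C').eq, ← mul_assoc, trLeg2_mul_leg1, trLeg2_mul_leg2]

end CommRing

theorem bmw_rmatrix_K_DD_relation_general
    {N : ℕ} (q μ : ℂ) (R ΨR K : TwoLeg N ℂ)
    (hK : K = (μ⁻¹ * (q - q⁻¹)⁻¹) •
      ((q • (1 : TwoLeg N ℂ) - R) * (q⁻¹ • (1 : TwoLeg N ℂ) + R)))
    (hrk : K.rank = 1)
    (htrK : trLeg2 K = μ⁻¹ • trLeg2 ΨR)
    (htrDK : trLeg2 (leg2 (trLeg2 ΨR) * K) = μ • (1 : Matrix (Fin N) (Fin N) ℂ))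
    (hRDD : R * (leg1 (trLeg2 ΨR) * leg2 (trLeg2 ΨR)) =
      leg1 (trLeg2 ΨR) * leg2 (trLeg2 ΨR) * R) :
    K * (leg1 (trLeg2 ΨR) * leg2 (trLeg2 ΨR)) = (μ ^ 2) • K ∧
    leg1 (trLeg2 ΨR) * leg2 (trLeg2 ΨR) * K = (μ ^ 2) • K := by
  set D := trLeg2 ΨR
  have hK0 : K ≠ 0 := by
    rintro rfl
    simp at hrk
  have hμ : μ ≠ 0 := by
    -- with `0⁻¹ = 0`, `hK` would force `K = 0`
    rintro rfl
    simp [hK] at hK0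
  have hcomm : Commute K (leg1 D * leg2 D) := by
    rw [hK]
    exact ((((Commute.one_left _).smul_left q).sub_left hRDD).mul_left
      (((Commute.one_left _).smul_left q⁻¹).add_left hRDD)).smul_left _
  obtain ⟨c, hc⟩ := Matrix.exists_mul_eq_smul_of_commute_of_rank_eq_one hrk hcomm
  have htr : (c * μ⁻¹) • D = μ • D := by
    calc (c * μ⁻¹) • D = trLeg2 (K * (leg1 D * leg2 D)) := by
          rw [hcomm.eq, hc, trLeg2_smul, htrK, smul_smul]
      _ = μ • D := by rw [trLeg2_mul_leg1_mul_leg2, htrDK, Matrix.smul_mul, Matrix.one_mul]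
  have : Nonempty (Fin N) := by
    by_contra h
    rw [not_nonempty_iff] at h
    exact hK0 (Subsingleton.elim _ _)
  have hD : D ≠ 0 := by
    intro hD0
    rw [hD0, leg2_zero, Matrix.zero_mul, trLeg2_zero] at htrDK
    exact hμ ((smul_eq_zero.mp htrDK.symm).resolve_right one_ne_zero)
  have hcμ : c = μ ^ 2 := by
    have h := smul_left_injective ℂ hD htr
    field_simp at h
    linear_combination h
  exact ⟨by rw [hcomm.eq, hc, hcμ], by rw [hc, hcμ]⟩

/-- For a skew invertible BMW type R-matrix `R` with rank-one operator `K`: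
`K₁₂ (D_R)₁ (D_R)₂ = (D_R)₁ (D_R)₂ K₁₂ = μ² K₁₂`. -/
theorem bmw_rmatrix_K_DD_relation
    {N : ℕ} (q μ : ℂ) (R Rinv ΨR K : TwoLeg N ℂ)
    (hYB : leg12 R * leg23 R * leg12 R = leg23 R * leg12 R * leg23 R)
    (hRinv : R * Rinv = 1 ∧ Rinv * R = 1)
    (hΨ : IsSkewInverse R ΨR)
    (hcubic : (q • (1 : TwoLeg N ℂ) - R) * (q⁻¹ • (1 : TwoLeg N ℂ) + R) *
      (μ • (1 : TwoLeg N ℂ) - R) = 0)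
    (hK : K = (μ⁻¹ * (q - q⁻¹)⁻¹) •
      ((q • (1 : TwoLeg N ℂ) - R) * (q⁻¹ • (1 : TwoLeg N ℂ) + R)))
    (hKRp : leg23 K * leg12 K = leg12 R * leg23 R * leg12 K)
    (hKRm : leg23 K * leg12 K = leg12 Rinv * leg23 Rinv * leg12 K)
    (hKKK : leg12 K * leg23 K * leg12 K = leg12 K)
    (hrk : K.rank = 1)
    (htrK : trLeg2 K = μ⁻¹ • trLeg2 ΨR)
    (htrDK : trLeg2 (leg2 (trLeg2 ΨR) * K) = μ • (1 : Matrix (Fin N) (Fin N) ℂ))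
    (hRDD : R * (leg1 (trLeg2 ΨR) * leg2 (trLeg2 ΨR)) =
      leg1 (trLeg2 ΨR) * leg2 (trLeg2 ΨR) * R) :
    K * (leg1 (trLeg2 ΨR) * leg2 (trLeg2 ΨR)) = (μ ^ 2) • K ∧
    leg1 (trLeg2 ΨR) * leg2 (trLeg2 ΨR) * K = (μ ^ 2) • K :=
  bmw_rmatrix_K_DD_relation_general q μ R ΨR K hK hrk htrK htrDK hRDD
end

section
/- In a quasitriangular Hopf algebra A with universal R-matrix R = a ⊗ b, let F = α ⊗ β be an invertible twisting element satisfying F₁₂·(Δ⊗id)(F) = F₂₃·(id⊗Δ)(F), (Δ⊗id)(F) = F₁₃F₂₃, and (id⊗Δ)(F) = F₁₃F₁₂. Then (S⊗S)(F) = F, the element ψ_F := α ⊗ S(β) is a two-sided skew inverse of F (i.e. inverse for the product (x⊗y)⊙(x'⊗y') = x'x ⊗ yy'), and F^{-1} = S(α) ⊗ β. -/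
/-! Slicing the hexagon identities with the counit on the outer leg gives
`(ε ⊗ id) F = 1 = (id ⊗ ε) F`. Slicing them instead with the antipode axioms
`m (id ⊗ S) Δ = η ε = m (S ⊗ id) Δ` on the two legs produced by `Δ` turns
`(Δ ⊗ id) F = F₁₃ F₂₃` into `F · (S ⊗ id) F = 1`, and `(id ⊗ Δ) F = F₁₃ F₁₂` into the
two skew-inverse identities for `ψ_F = (id ⊗ S) F`. Inverting the second hexagon,
`(id ⊗ Δ) F⁻¹ = F⁻¹₁₂ F⁻¹₁₃`, and slicing again gives `(id ⊗ S) F⁻¹ = F`, whence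
`(S ⊗ S) F = (id ⊗ S) F⁻¹ = F`. -/

open TensorProduct

noncomputable section

variable (A : Type) [Ring A] [HopfAlgebra ℂ A]

/-- The inclusion `A ⊗ A → A ⊗ A ⊗ A` on legs 1,2: `x ⊗ y ↦ x ⊗ y ⊗ 1`. -/
def ins12 : A ⊗[ℂ] A →ₗ[ℂ] A ⊗[ℂ] (A ⊗[ℂ] A) :=
  TensorProduct.map LinearMap.id ((TensorProduct.mk ℂ A A).flip 1)

/-- The inclusion on legs 2,3: `x ⊗ y ↦ 1 ⊗ x ⊗ y`. -/
def ins23 : A ⊗[ℂ] A →ₗ[ℂ] A ⊗[ℂ] (A ⊗[ℂ] A) :=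
  TensorProduct.mk ℂ A (A ⊗[ℂ] A) 1

/-- The inclusion on legs 1,3: `x ⊗ y ↦ x ⊗ 1 ⊗ y`. -/
def ins13 : A ⊗[ℂ] A →ₗ[ℂ] A ⊗[ℂ] (A ⊗[ℂ] A) :=
  TensorProduct.map LinearMap.id (TensorProduct.mk ℂ A A 1)

/-- `Δ ⊗ id`, reassociated: `A ⊗ A → A ⊗ (A ⊗ A)`. -/
def comulLeft : A ⊗[ℂ] A →ₗ[ℂ] A ⊗[ℂ] (A ⊗[ℂ] A) :=
  (TensorProduct.assoc ℂ A A A).toLinearMap ∘ₗ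
    LinearMap.rTensor A (Coalgebra.comul (R := ℂ) (A := A))

/-- `id ⊗ Δ : A ⊗ A → A ⊗ (A ⊗ A)`. -/
def comulRight : A ⊗[ℂ] A →ₗ[ℂ] A ⊗[ℂ] (A ⊗[ℂ] A) :=
  LinearMap.lTensor A (Coalgebra.comul (R := ℂ) (A := A))

/-- The linear equivalence `A ⊗ A ≃ Aᵐᵒᵖ ⊗ A` used to express the skew
product `(x⊗y) ⊙ (x'⊗y') = x'x ⊗ yy'` as the multiplication of `Aᵐᵒᵖ ⊗ A`. -/
def skewEquiv : A ⊗[ℂ] A ≃ₗ[ℂ] Aᵐᵒᵖ ⊗[ℂ] A :=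
  TensorProduct.congr (MulOpposite.opLinearEquiv ℂ) (LinearEquiv.refl ℂ A)

lemma map_inverse_eq_mul_rev {M N G : Type*} [Monoid M] [Monoid N] [FunLike G M N]
    [MonoidHomClass G M N] {f g h : G} {x y : M} (hxy : x * y = 1) (hyx : y * x = 1)
    (hx : f x = g x * h x) : f y = h y * g y := by
  have hinv : f x * (h y * g y) = 1 := by
    rw [hx, mul_assoc, ← mul_assoc (h x), ← map_mul, hxy, map_one, one_mul, ← map_mul, hxy,
      map_one]
  calc f y = f y * (f x * (h y * g y)) := by rw [hinv, mul_one]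
    _ = h y * g y := by rw [← mul_assoc, ← map_mul, hyx, map_one, one_mul]

def ins12AlgHom : A ⊗[ℂ] A →ₐ[ℂ] A ⊗[ℂ] (A ⊗[ℂ] A) :=
  Algebra.TensorProduct.map (AlgHom.id ℂ A) Algebra.TensorProduct.includeLeft

def ins13AlgHom : A ⊗[ℂ] A →ₐ[ℂ] A ⊗[ℂ] (A ⊗[ℂ] A) :=
  Algebra.TensorProduct.map (AlgHom.id ℂ A) Algebra.TensorProduct.includeRight

def comulRightAlgHom : A ⊗[ℂ] A →ₐ[ℂ] A ⊗[ℂ] (A ⊗[ℂ] A) :=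
  Algebra.TensorProduct.map (AlgHom.id ℂ A) (Bialgebra.comulAlgHom ℂ A)

lemma ins12AlgHom_toLinearMap : (ins12AlgHom A).toLinearMap = ins12 A := by
  ext x y; simp [ins12, ins12AlgHom]

lemma ins13AlgHom_toLinearMap : (ins13AlgHom A).toLinearMap = ins13 A := by
  ext x y; simp [ins13, ins13AlgHom]

lemma comulRightAlgHom_toLinearMap : (comulRightAlgHom A).toLinearMap = comulRight A := by
  ext x y; simp [comulRight, comulRightAlgHom, Bialgebra.comulAlgHom]

lemma comulRight_inverse {F G : A ⊗[ℂ] A} (hFG : F * G = 1) (hGF : G * F = 1)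
    (hex : comulRight A F = ins13 A F * ins12 A F) :
    comulRight A G = ins12 A G * ins13 A G := by
  simp only [← comulRightAlgHom_toLinearMap, ← ins12AlgHom_toLinearMap,
    ← ins13AlgHom_toLinearMap, AlgHom.toLinearMap_apply] at hex ⊢
  exact map_inverse_eq_mul_rev hFG hGF hex

def epsLeg1 : A ⊗[ℂ] (A ⊗[ℂ] A) →ₐ[ℂ] A ⊗[ℂ] A :=
  (Algebra.TensorProduct.lid ℂ (A ⊗[ℂ] A)).toAlgHom.comp
    (Algebra.TensorProduct.map (Bialgebra.counitAlgHom ℂ A) (AlgHom.id ℂ (A ⊗[ℂ] A)))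

def epsLeg3 : A ⊗[ℂ] (A ⊗[ℂ] A) →ₐ[ℂ] A ⊗[ℂ] A :=
  Algebra.TensorProduct.map (AlgHom.id ℂ A)
    ((Algebra.TensorProduct.rid ℂ ℂ A).toAlgHom.comp
      (Algebra.TensorProduct.map (AlgHom.id ℂ A) (Bialgebra.counitAlgHom ℂ A)))

-- `etaEpsLeft F = 1` is the normalisation `(ε ⊗ id) F = 1`, read inside `A ⊗ A`.
def etaEpsLeft : A ⊗[ℂ] A →ₐ[ℂ] A ⊗[ℂ] A :=
  Algebra.TensorProduct.map ((Algebra.ofId ℂ A).comp (Bialgebra.counitAlgHom ℂ A))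
    (AlgHom.id ℂ A)

def etaEpsRight : A ⊗[ℂ] A →ₐ[ℂ] A ⊗[ℂ] A :=
  Algebra.TensorProduct.map (AlgHom.id ℂ A)
    ((Algebra.ofId ℂ A).comp (Bialgebra.counitAlgHom ℂ A))

lemma epsLeg1_comulLeft (x : A ⊗[ℂ] A) : epsLeg1 A (comulLeft A x) = x := by
  suffices h : (epsLeg1 A).toLinearMap ∘ₗ comulLeft A = LinearMap.id from
    LinearMap.congr_fun h x
  have hassoc : (epsLeg1 A).toLinearMap ∘ₗ (TensorProduct.assoc ℂ A A A).toLinearMap =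
      LinearMap.rTensor A ((TensorProduct.lid ℂ A).toLinearMap ∘ₗ
        LinearMap.rTensor A (Coalgebra.counit (R := ℂ))) := by
    ext x y z
    simp [epsLeg1, Bialgebra.counitAlgHom, TensorProduct.smul_tmul']
  rw [comulLeft, ← LinearMap.comp_assoc, hassoc, ← LinearMap.rTensor_comp,
    LinearMap.comp_assoc, Coalgebra.rTensor_counit_comp_comul]
  ext; simp

lemma epsLeg3_comulRight (x : A ⊗[ℂ] A) : epsLeg3 A (comulRight A x) = x := by
  suffices h : (epsLeg3 A).toLinearMap ∘ₗ comulRight A = LinearMap.id from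
    LinearMap.congr_fun h x
  have hlTensor : (epsLeg3 A).toLinearMap = LinearMap.lTensor A
      ((TensorProduct.rid ℂ A).toLinearMap ∘ₗ
        LinearMap.lTensor A (Coalgebra.counit (R := ℂ))) := by
    ext x y
    simp [epsLeg3, Bialgebra.counitAlgHom]
  rw [comulRight, hlTensor, ← LinearMap.lTensor_comp, LinearMap.comp_assoc,
    Coalgebra.lTensor_counit_comp_comul]
  ext; simp

lemma epsLeg1_ins23 (x : A ⊗[ℂ] A) : epsLeg1 A (ins23 A x) = x := by
  induction x using TensorProduct.induction_on with
  | zero => simp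
  | tmul a b => simp [epsLeg1, ins23, Bialgebra.counitAlgHom]
  | add x y hx hy => simp only [map_add, hx, hy]

lemma epsLeg3_ins12 (x : A ⊗[ℂ] A) : epsLeg3 A (ins12 A x) = x := by
  induction x using TensorProduct.induction_on with
  | zero => simp
  | tmul a b => simp [epsLeg3, ins12, Bialgebra.counitAlgHom]
  | add x y hx hy => simp only [map_add, hx, hy]

lemma epsLeg1_ins13 (x : A ⊗[ℂ] A) : epsLeg1 A (ins13 A x) = etaEpsLeft A x := by
  induction x using TensorProduct.induction_on with
  | zero => simp
  | tmul a b =>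
    simp [epsLeg1, ins13, etaEpsLeft, Bialgebra.counitAlgHom, Algebra.algebraMap_eq_smul_one,
      TensorProduct.smul_tmul']
  | add x y hx hy => simp only [map_add, hx, hy]

lemma epsLeg3_ins13 (x : A ⊗[ℂ] A) : epsLeg3 A (ins13 A x) = etaEpsRight A x := by
  induction x using TensorProduct.induction_on with
  | zero => simp
  | tmul a b =>
    simp [epsLeg3, ins13, etaEpsRight, Bialgebra.counitAlgHom, Algebra.algebraMap_eq_smul_one]
  | add x y hx hy => simp only [map_add, hx, hy]

lemma etaEpsLeft_eq_one {F : A ⊗[ℂ] A} (hF : IsUnit F)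
    (hex : comulLeft A F = ins13 A F * ins23 A F) : etaEpsLeft A F = 1 := by
  have h := congrArg (epsLeg1 A) hex
  rw [map_mul, epsLeg1_comulLeft, epsLeg1_ins13, epsLeg1_ins23] at h
  exact hF.mul_right_cancel (by rw [one_mul, ← h])

lemma etaEpsRight_eq_one {F : A ⊗[ℂ] A} (hF : IsUnit F)
    (hex : comulRight A F = ins13 A F * ins12 A F) : etaEpsRight A F = 1 := by
  have h := congrArg (epsLeg3 A) hex
  rw [map_mul, epsLeg3_comulRight, epsLeg3_ins13, epsLeg3_ins12] at h
  exact hF.mul_right_cancel (by rw [one_mul, ← h])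

def mulAntipode12 : A ⊗[ℂ] (A ⊗[ℂ] A) →ₗ[ℂ] A ⊗[ℂ] A :=
  LinearMap.rTensor A
      (LinearMap.mul' ℂ A ∘ₗ LinearMap.lTensor A (HopfAlgebra.antipode ℂ)) ∘ₗ
    (TensorProduct.assoc ℂ A A A).symm.toLinearMap

def mulAntipode23 : A ⊗[ℂ] (A ⊗[ℂ] A) →ₗ[ℂ] A ⊗[ℂ] A :=
  LinearMap.lTensor A (LinearMap.mul' ℂ A ∘ₗ LinearMap.lTensor A (HopfAlgebra.antipode ℂ))

def antipodeMul23 : A ⊗[ℂ] (A ⊗[ℂ] A) →ₗ[ℂ] A ⊗[ℂ] A :=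
  LinearMap.lTensor A (LinearMap.mul' ℂ A ∘ₗ LinearMap.rTensor A (HopfAlgebra.antipode ℂ))

lemma mulAntipode12_comulLeft (x : A ⊗[ℂ] A) :
    mulAntipode12 A (comulLeft A x) = etaEpsLeft A x := by
  suffices h : mulAntipode12 A ∘ₗ comulLeft A = (etaEpsLeft A).toLinearMap from
    LinearMap.congr_fun h x
  rw [mulAntipode12, comulLeft, LinearMap.comp_assoc,
    ← LinearMap.comp_assoc _ (TensorProduct.assoc ℂ A A A).toLinearMap, LinearEquiv.comp_coe,
    LinearEquiv.self_trans_symm, LinearEquiv.refl_toLinearMap, LinearMap.id_comp,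
    ← LinearMap.rTensor_comp, LinearMap.comp_assoc,
    HopfAlgebra.mul_antipode_lTensor_comul]
  ext a b; simp [etaEpsLeft, Bialgebra.counitAlgHom]

lemma mulAntipode23_comulRight (x : A ⊗[ℂ] A) :
    mulAntipode23 A (comulRight A x) = etaEpsRight A x := by
  suffices h : mulAntipode23 A ∘ₗ comulRight A = (etaEpsRight A).toLinearMap from
    LinearMap.congr_fun h x
  rw [mulAntipode23, comulRight, ← LinearMap.lTensor_comp, LinearMap.comp_assoc,
    HopfAlgebra.mul_antipode_lTensor_comul]
  ext a b; simp [etaEpsRight, Bialgebra.counitAlgHom]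

lemma antipodeMul23_comulRight (x : A ⊗[ℂ] A) :
    antipodeMul23 A (comulRight A x) = etaEpsRight A x := by
  suffices h : antipodeMul23 A ∘ₗ comulRight A = (etaEpsRight A).toLinearMap from
    LinearMap.congr_fun h x
  rw [antipodeMul23, comulRight, ← LinearMap.lTensor_comp, LinearMap.comp_assoc,
    HopfAlgebra.mul_antipode_rTensor_comul]
  ext a b; simp [etaEpsRight, Bialgebra.counitAlgHom]

lemma mulAntipode12_ins13_mul_ins23 (x y : A ⊗[ℂ] A) :
    mulAntipode12 A (ins13 A x * ins23 A y) =
      x * TensorProduct.map (HopfAlgebra.antipode ℂ) LinearMap.id y := by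
  have h : ((LinearMap.mul ℂ _).compl₁₂ (ins13 A) (ins23 A)).compr₂ (mulAntipode12 A) =
      (LinearMap.mul ℂ (A ⊗[ℂ] A)).compl₂
        (TensorProduct.map (HopfAlgebra.antipode ℂ) LinearMap.id) := by
    ext; simp [mulAntipode12, ins13, ins23]
  exact LinearMap.congr_fun₂ h x y

lemma mulAntipode23_ins12_mul_ins13 (x y : A ⊗[ℂ] A) :
    mulAntipode23 A (ins12 A x * ins13 A y) =
      x * TensorProduct.map LinearMap.id (HopfAlgebra.antipode ℂ) y := by
  have h : ((LinearMap.mul ℂ _).compl₁₂ (ins12 A) (ins13 A)).compr₂ (mulAntipode23 A) =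
      (LinearMap.mul ℂ (A ⊗[ℂ] A)).compl₂
        (TensorProduct.map LinearMap.id (HopfAlgebra.antipode ℂ)) := by
    ext; simp [mulAntipode23, ins12, ins13]
  exact LinearMap.congr_fun₂ h x y

lemma skewEquiv_antipodeMul23_ins13_mul_ins12 (x y : A ⊗[ℂ] A) :
    skewEquiv A (antipodeMul23 A (ins13 A x * ins12 A y)) =
      skewEquiv A (TensorProduct.map LinearMap.id (HopfAlgebra.antipode ℂ) y) *
        skewEquiv A x := by
  have h : ((LinearMap.mul ℂ _).compl₁₂ (ins13 A) (ins12 A)).compr₂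
        ((skewEquiv A).toLinearMap ∘ₗ antipodeMul23 A) =
      ((LinearMap.mul ℂ (Aᵐᵒᵖ ⊗[ℂ] A)).compl₁₂
        ((skewEquiv A).toLinearMap ∘ₗ TensorProduct.map LinearMap.id (HopfAlgebra.antipode ℂ))
        (skewEquiv A).toLinearMap).flip := by
    ext; simp [antipodeMul23, skewEquiv, ins12, ins13]
  exact LinearMap.congr_fun₂ h x y

lemma skewEquiv_mulAntipode23_ins13_mul_ins12 (x y : A ⊗[ℂ] A) :
    skewEquiv A (mulAntipode23 A (ins13 A x * ins12 A y)) =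
      skewEquiv A y *
        skewEquiv A (TensorProduct.map LinearMap.id (HopfAlgebra.antipode ℂ) x) := by
  have h : ((LinearMap.mul ℂ _).compl₁₂ (ins13 A) (ins12 A)).compr₂
        ((skewEquiv A).toLinearMap ∘ₗ mulAntipode23 A) =
      ((LinearMap.mul ℂ (Aᵐᵒᵖ ⊗[ℂ] A)).compl₁₂ (skewEquiv A).toLinearMap
        ((skewEquiv A).toLinearMap ∘ₗ
          TensorProduct.map LinearMap.id (HopfAlgebra.antipode ℂ))).flip := by
    ext; simp [mulAntipode23, skewEquiv, ins12, ins13]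
  exact LinearMap.congr_fun₂ h x y

lemma mul_map_antipode_id_eq_one {F : A ⊗[ℂ] A} (hF : IsUnit F)
    (hex : comulLeft A F = ins13 A F * ins23 A F) :
    F * TensorProduct.map (HopfAlgebra.antipode ℂ) LinearMap.id F = 1 := by
  rw [← mulAntipode12_ins13_mul_ins23, ← hex, mulAntipode12_comulLeft,
    etaEpsLeft_eq_one A hF hex]

lemma mul_map_id_antipode_eq_one {G : A ⊗[ℂ] A} (hε : etaEpsRight A G = 1)
    (hex : comulRight A G = ins12 A G * ins13 A G) :
    G * TensorProduct.map LinearMap.id (HopfAlgebra.antipode ℂ) G = 1 := by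
  rw [← mulAntipode23_ins12_mul_ins13, ← hex, mulAntipode23_comulRight, hε]

lemma skewEquiv_one : skewEquiv A 1 = 1 := by
  simp [skewEquiv, Algebra.TensorProduct.one_def]

lemma skewEquiv_map_id_antipode_mul_skewEquiv {F : A ⊗[ℂ] A} (hε : etaEpsRight A F = 1)
    (hex : comulRight A F = ins13 A F * ins12 A F) :
    skewEquiv A (TensorProduct.map LinearMap.id (HopfAlgebra.antipode ℂ) F) *
      skewEquiv A F = 1 := by
  rw [← skewEquiv_antipodeMul23_ins13_mul_ins12, ← hex, antipodeMul23_comulRight, hε,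
    skewEquiv_one]

lemma skewEquiv_mul_skewEquiv_map_id_antipode {F : A ⊗[ℂ] A} (hε : etaEpsRight A F = 1)
    (hex : comulRight A F = ins13 A F * ins12 A F) :
    skewEquiv A F *
      skewEquiv A (TensorProduct.map LinearMap.id (HopfAlgebra.antipode ℂ) F) = 1 := by
  rw [← skewEquiv_mulAntipode23_ins13_mul_ins12, ← hex, mulAntipode23_comulRight, hε,
    skewEquiv_one]

theorem twisting_element_antipode_properties
    (Fm Finv : A ⊗[ℂ] A)
    (hF1 : Fm * Finv = 1) (hF2 : Finv * Fm = 1)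
    (hFhex1 : comulLeft A Fm = ins13 A Fm * ins23 A Fm)
    (hFhex2 : comulRight A Fm = ins13 A Fm * ins12 A Fm) :
    TensorProduct.map (HopfAlgebra.antipode (R := ℂ)) (HopfAlgebra.antipode (R := ℂ)) Fm
        = Fm ∧
    skewEquiv A (TensorProduct.map LinearMap.id (HopfAlgebra.antipode (R := ℂ)) Fm) *
        skewEquiv A Fm = 1 ∧
    skewEquiv A Fm *
        skewEquiv A (TensorProduct.map LinearMap.id (HopfAlgebra.antipode (R := ℂ)) Fm)
        = 1 ∧
    Finv = TensorProduct.map (HopfAlgebra.antipode (R := ℂ)) LinearMap.id Fm := by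
  have hF : IsUnit Fm := ⟨⟨Fm, Finv, hF1, hF2⟩, rfl⟩
  have hεF : etaEpsRight A Fm = 1 := etaEpsRight_eq_one A hF hFhex2
  have hεFinv : etaEpsRight A Finv = 1 := by
    rw [← map_one (etaEpsRight A), ← hF2, map_mul, hεF, mul_one]
  have hFinv : Finv = TensorProduct.map (HopfAlgebra.antipode ℂ) LinearMap.id Fm :=
    left_inv_eq_right_inv hF2 (mul_map_antipode_id_eq_one A hF hFhex1)
  have hF_eq : Fm = TensorProduct.map LinearMap.id (HopfAlgebra.antipode ℂ) Finv :=
    left_inv_eq_right_inv hF1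
      (mul_map_id_antipode_eq_one A hεFinv (comulRight_inverse A hF1 hF2 hFhex2))
  refine ⟨?_, skewEquiv_map_id_antipode_mul_skewEquiv A hεF hFhex2,
    skewEquiv_mul_skewEquiv_map_id_antipode A hεF hFhex2, hFinv⟩
  calc TensorProduct.map (HopfAlgebra.antipode ℂ) (HopfAlgebra.antipode ℂ) Fm
      = TensorProduct.map LinearMap.id (HopfAlgebra.antipode ℂ)
          (TensorProduct.map (HopfAlgebra.antipode ℂ) LinearMap.id Fm) := by
        rw [TensorProduct.map_map, LinearMap.id_comp, LinearMap.comp_id]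
    _ = Fm := by rw [← hFinv, ← hF_eq]

end
end

section
/- With the assumptions of the twisting setup (F an invertible twisting element of a quasitriangular Hopf algebra satisfying the hexagon-type conditions (Δ⊗id)(F) = F₁₃F₂₃ and (id⊗Δ)(F) = F₁₃F₁₂ and the cocycle condition F₁₂(Δ⊗id)(F) = F₂₃(id⊗Δ)(F)), the element φ := α S(β) (where F = α⊗β) is invertible with φ^{-1} = S(γ)δ (where F^{-1} = γ⊗δ), and its coproduct is Δ(φ) = F₁₂^{-1} F₂₁^{-1} · (φ ⊗ φ). -/
open TensorProduct

/-!
Write `φ = m (id ⊗ S) F` and `ψ = m (S ⊗ id) F⁻¹`. Applying the counit to a leg of the two hexagon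
identities shows that `(ε ⊗ id) F = (id ⊗ ε) F = 1`. The map `x ⊗ y ⊗ z ↦ x S(y) z` sends the
cocycle identity, read as `F₂₃⁻¹ F₁₂ (Δ ⊗ id)(F) = (id ⊗ Δ)(F)`, to `φ ψ = 1`, and
`x ⊗ y ⊗ z ↦ S(x) y S(z)` sends `F₁₂⁻¹ F₂₃ (id ⊗ Δ)(F) = (Δ ⊗ id)(F)` to `ψ φ = 1`.

For the coproduct, `x ⊗ y ⊗ z ↦ (x ⊗ y) Δ(S z)` sends the left side of the cocycle identity to
`F Δ(φ)` and its right side, rewritten as `F₂₃ F₁₃ F₁₂` by the second hexagon, to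
`∑ (1 ⊗ α) (∑ (α' ⊗ 1) F Δ(S β')) Δ(S β)`. Since `Δ(S β) = S β₂ ⊗ S β₁`, the second hexagon
once more turns the inner sum into `φ ⊗ 1` and the outer one into `F₂₁⁻¹ (φ ⊗ φ)`; the last step
uses `(1 ⊗ φ) (id ⊗ S)(F) = F⁻¹ (1 ⊗ φ)`, the image of the first hexagon and the cocycle identity
under `id ⊗ m (id ⊗ S)`.
-/

open TensorProduct Coalgebra WithConv

@[elab_as_elim]
theorem TensorProduct.induction_on₃ {R M N P : Type*} [CommSemiring R] [AddCommMonoid M]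
    [AddCommMonoid N] [AddCommMonoid P] [Module R M] [Module R N] [Module R P]
    {motive : M ⊗[R] (N ⊗[R] P) → Prop} (w : M ⊗[R] (N ⊗[R] P)) (zero : motive 0)
    (tmul : ∀ x y z, motive (x ⊗ₜ (y ⊗ₜ z)))
    (add : ∀ w₁ w₂, motive w₁ → motive w₂ → motive (w₁ + w₂)) :
    motive w := by
  induction w using TensorProduct.induction_on with
  | zero => exact zero
  | add w₁ w₂ h₁ h₂ => exact add w₁ w₂ h₁ h₂
  | tmul x v =>
    induction v using TensorProduct.induction_on with
    | zero => simpa using zero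
    | tmul y z => exact tmul x y z
    | add v₁ v₂ h₁ h₂ => simpa [tmul_add] using add _ _ h₁ h₂

section Sandwich

variable {R M N B : Type*} [CommSemiring R] [AddCommMonoid M] [Module R M] [AddCommMonoid N]
  [Module R N] [Semiring B] [Algebra R B]

def sandwich (f : M →ₗ[R] B) (g : N →ₗ[R] B) (z : B) : M ⊗[R] N →ₗ[R] B :=
  LinearMap.mul' R B ∘ₗ map (LinearMap.mulRight R z ∘ₗ f) g

@[simp]
lemma sandwich_tmul (f : M →ₗ[R] B) (g : N →ₗ[R] B) (z : B) (m : M) (n : N) :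
    sandwich f g z (m ⊗ₜ n) = f m * z * g n := by
  simp [sandwich]

@[simp]
lemma sandwich_zero (f : M →ₗ[R] B) (g : N →ₗ[R] B) : sandwich f g 0 = 0 := by
  ext; simp

lemma sandwich_add (f : M →ₗ[R] B) (g : N →ₗ[R] B) (z₁ z₂ : B) :
    sandwich f g (z₁ + z₂) = sandwich f g z₁ + sandwich f g z₂ := by
  ext; simp [mul_add, add_mul]

lemma sandwich_comp_lTensor {P : Type*} [AddCommMonoid P] [Module R P] (f : M →ₗ[R] B)
    (g : N →ₗ[R] B) (h : P →ₗ[R] N) (z : B) :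
    sandwich f (g ∘ₗ h) z = sandwich f g z ∘ₗ LinearMap.lTensor M h := by
  ext; simp

end Sandwich

section Bialgebra

variable (R A B : Type*) [CommSemiring R] [Semiring A] [Bialgebra R A] [Semiring B] [Algebra R B]

def counitLeft : A ⊗[R] B →ₐ[R] B :=
  (Algebra.TensorProduct.lid R B).toAlgHom.comp
    (Algebra.TensorProduct.map (Bialgebra.counitAlgHom R A) (AlgHom.id R B))

def counitRight : B ⊗[R] A →ₐ[R] B :=
  (Algebra.TensorProduct.rid R R B).toAlgHom.comp
    (Algebra.TensorProduct.map (AlgHom.id R B) (Bialgebra.counitAlgHom R A))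

variable {R A B}

@[simp]
lemma counitLeft_tmul (a : A) (b : B) : counitLeft R A B (a ⊗ₜ b) = counit (R := R) a • b := by
  simp [counitLeft]

@[simp]
lemma counitRight_tmul (b : B) (a : A) : counitRight R A B (b ⊗ₜ a) = counit (R := R) a • b := by
  simp [counitRight]

@[simp]
lemma counitLeft_comul (a : A) : counitLeft R A A (comul a) = a := by
  have : (counitLeft R A A).toLinearMap =
      (TensorProduct.lid R A).toLinearMap ∘ₗ LinearMap.rTensor A counit := by
    ext; simp
  simpa using congr($this (comul a))

@[simp]
lemma counitRight_comul (a : A) : counitRight R A A (comul a) = a := by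
  have : (counitRight R A A).toLinearMap =
      (TensorProduct.rid R A).toLinearMap ∘ₗ LinearMap.lTensor A counit := by
    ext; simp
  simpa using congr($this (comul a))

end Bialgebra

section HopfAlgebra

variable (R A : Type*) [CommSemiring R] [Semiring A] [HopfAlgebra R A]

local notation "S" => HopfAlgebra.antipode R (A := A)
local notation "ι₁" => AlgHom.toLinearMap (Algebra.TensorProduct.includeLeft : A →ₐ[R] A ⊗[R] A)
local notation "ι₂" => AlgHom.toLinearMap (Algebra.TensorProduct.includeRight : A →ₐ[R] A ⊗[R] A)

def mulIdAntipode : A ⊗[R] A →ₗ[R] A := LinearMap.mul' R A ∘ₗ map LinearMap.id S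

def mulAntipodeId : A ⊗[R] A →ₗ[R] A := LinearMap.mul' R A ∘ₗ map S LinearMap.id

def mulAntipodeMiddle : A ⊗[R] (A ⊗[R] A) →ₗ[R] A :=
  LinearMap.mul' R A ∘ₗ LinearMap.lTensor A (mulAntipodeId R A)

def mulAntipodeOuter : A ⊗[R] (A ⊗[R] A) →ₗ[R] A :=
  LinearMap.mul' R A ∘ₗ map S (mulIdAntipode R A)

def mulComulAntipode : A ⊗[R] (A ⊗[R] A) →ₗ[R] A ⊗[R] A :=
  LinearMap.mul' R (A ⊗[R] A) ∘ₗ map LinearMap.id (comul ∘ₗ S) ∘ₗ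
    (TensorProduct.assoc R A A A).symm.toLinearMap

variable {R A}

@[simp]
lemma mulIdAntipode_tmul (x y : A) : mulIdAntipode R A (x ⊗ₜ y) = x * S y := rfl

@[simp]
lemma mulAntipodeId_tmul (x y : A) : mulAntipodeId R A (x ⊗ₜ y) = S x * y := rfl

@[simp]
lemma mulAntipodeMiddle_tmul (x y z : A) :
    mulAntipodeMiddle R A (x ⊗ₜ (y ⊗ₜ z)) = x * (S y * z) := rfl

@[simp]
lemma mulAntipodeOuter_tmul (x y z : A) :
    mulAntipodeOuter R A (x ⊗ₜ (y ⊗ₜ z)) = S x * (y * S z) := rfl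

@[simp]
lemma mulComulAntipode_tmul (x y z : A) :
    mulComulAntipode R A (x ⊗ₜ (y ⊗ₜ z)) = (x ⊗ₜ y) * comul (S z) := by
  simp [mulComulAntipode]

lemma mulIdAntipode_comul (a : A) : mulIdAntipode R A (comul a) = counit (R := R) a • 1 := by
  rw [← Algebra.algebraMap_eq_smul_one]
  exact HopfAlgebra.mul_antipode_lTensor_comul_apply a

lemma mulAntipodeId_comul (a : A) : mulAntipodeId R A (comul a) = counit (R := R) a • 1 := by
  rw [← Algebra.algebraMap_eq_smul_one]
  exact HopfAlgebra.mul_antipode_rTensor_comul_apply a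

theorem mul'_map_includeLeft_antipode_comul (w : A) :
    LinearMap.mul' R (A ⊗[R] A) (map (ι₁ ∘ₗ S) comul (comul w)) = 1 ⊗ₜ w := by
  have hsplit : LinearMap.mul' R (A ⊗[R] A) ∘ₗ map (ι₁ ∘ₗ S) LinearMap.id =
      (mulAntipodeId R A).rTensor A ∘ₗ (TensorProduct.assoc R A A A).symm.toLinearMap :=
    TensorProduct.ext_threefold' fun x y z ↦ by simp
  have hcounit : mulAntipodeId R A ∘ₗ comul = Algebra.linearMap R A ∘ₗ counit :=
    LinearMap.ext fun a ↦ by simp [mulAntipodeId_comul, Algebra.algebraMap_eq_smul_one]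
  have := congr($hsplit (LinearMap.lTensor A comul (comul w)))
  simp only [LinearMap.comp_apply, LinearMap.map_lTensor, LinearMap.id_comp, LinearEquiv.coe_coe,
    coassoc_symm_apply] at this
  rw [this, ← LinearMap.rTensor_comp_apply, hcounit, LinearMap.rTensor_comp_apply,
    rTensor_counit_comul]
  simp

/-- `(S ⊗ S) ∘ τ ∘ Δ` is a left and `Δ ∘ S` a right convolution inverse of `Δ`. -/
theorem comul_antipode (a : A) :
    comul (S a) = map S S (TensorProduct.comm R A A (comul a)) := by
  set swapS := map S S ∘ₗ (TensorProduct.comm R A A).toLinearMap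
  have hsplit : LinearMap.mul' R (A ⊗[R] A) ∘ₗ map swapS comul ∘ₗ
      (TensorProduct.assoc R A A A).symm.toLinearMap =
      LinearMap.mul' R (A ⊗[R] A) ∘ₗ
        map (ι₂ ∘ₗ S) (LinearMap.mul' R (A ⊗[R] A) ∘ₗ map (ι₁ ∘ₗ S) comul) :=
    TensorProduct.ext_threefold' fun x y z ↦ by
      simp [swapS, ← mul_assoc, Algebra.TensorProduct.tmul_mul_tmul]
  have hinner : LinearMap.mul' R (A ⊗[R] A) ∘ₗ map (ι₁ ∘ₗ S) comul ∘ₗ comul = ι₂ :=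
    LinearMap.ext mul'_map_includeLeft_antipode_comul
  have hmul : LinearMap.mul' R (A ⊗[R] A) ∘ₗ map (ι₂ ∘ₗ S) ι₂ = ι₂ ∘ₗ mulAntipodeId R A := by
    ext; simp
  have hleft : toConv (swapS ∘ₗ comul) * toConv (comul (R := R) (A := A)) = 1 := by
    ext c
    calc LinearMap.mul' R (A ⊗[R] A) (map (swapS ∘ₗ comul) comul (comul c))
        = LinearMap.mul' R (A ⊗[R] A) (map swapS comul
            ((TensorProduct.assoc R A A A).symm (LinearMap.lTensor A comul (comul c)))) := by
          rw [coassoc_symm_apply, LinearMap.map_rTensor]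
      _ = LinearMap.mul' R (A ⊗[R] A) (map (ι₂ ∘ₗ S) ι₂ (comul c)) := by
          have := congr($hsplit (LinearMap.lTensor A comul (comul c)))
          simp only [LinearMap.comp_apply, LinearEquiv.coe_coe] at this
          rw [this, LinearMap.map_lTensor, LinearMap.comp_assoc, hinner]
      _ = _ := by
          rw [← LinearMap.comp_apply (f := LinearMap.mul' R (A ⊗[R] A)), hmul]
          simp [mulAntipodeId_comul, Algebra.algebraMap_eq_smul_one, Algebra.TensorProduct.one_def]
  exact congr($(left_inv_eq_right_inv hleft LinearMap.comul_right_inv) a).symm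

theorem comul_comp_antipode :
    comul ∘ₗ S = (map S S ∘ₗ (TensorProduct.comm R A A).toLinearMap) ∘ₗ comul :=
  LinearMap.ext comul_antipode

lemma sandwich_includeLeft_one (U : A ⊗[R] A) :
    sandwich ι₁ (ι₁ ∘ₗ S) 1 U = mulIdAntipode R A U ⊗ₜ 1 := by
  induction U using TensorProduct.induction_on with
  | zero => simp
  | tmul a b => simp [Algebra.TensorProduct.tmul_mul_tmul]
  | add U₁ U₂ h₁ h₂ => simp only [map_add, h₁, h₂, add_tmul]

lemma sandwich_includeRight_tmul_one (x : A) (V : A ⊗[R] A) :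
    sandwich ι₂ (ι₂ ∘ₗ S) (x ⊗ₜ 1) V = x ⊗ₜ mulIdAntipode R A V := by
  induction V using TensorProduct.induction_on with
  | zero => simp
  | tmul a b => simp [Algebra.TensorProduct.tmul_mul_tmul]
  | add V₁ V₂ h₁ h₂ => simp only [map_add, h₁, h₂, tmul_add]

lemma sandwich_includeRight_includeLeft (x y : A) (U : A ⊗[R] A) :
    sandwich ι₂ (ι₁ ∘ₗ S) (x ⊗ₜ y) U =
      TensorProduct.comm R A A (sandwich ι₁ (ι₂ ∘ₗ S) (1 ⊗ₜ x) U) * (1 ⊗ₜ y) := by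
  induction U using TensorProduct.induction_on with
  | zero => simp
  | tmul a b => simp [Algebra.TensorProduct.tmul_mul_tmul]
  | add U₁ U₂ h₁ h₂ => simp only [map_add, h₁, h₂, add_mul]

end HopfAlgebra

section Twist

variable {A : Type} [Ring A] [HopfAlgebra ℂ A] {Fm Finv : A ⊗[ℂ] A}

local notation "S" => HopfAlgebra.antipode ℂ (A := A)
local notation "ι₁" => AlgHom.toLinearMap (Algebra.TensorProduct.includeLeft : A →ₐ[ℂ] A ⊗[ℂ] A)
local notation "ι₂" => AlgHom.toLinearMap (Algebra.TensorProduct.includeRight : A →ₐ[ℂ] A ⊗[ℂ] A)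
local notation "ε₃" => Algebra.TensorProduct.map (AlgHom.id ℂ A) (counitRight ℂ A A)

@[simp]
lemma ins12_tmul (x y : A) : ins12 A (x ⊗ₜ y) = x ⊗ₜ (y ⊗ₜ 1) := rfl

@[simp]
lemma ins13_tmul (x y : A) : ins13 A (x ⊗ₜ y) = x ⊗ₜ (1 ⊗ₜ y) := rfl

lemma ins23_apply (X : A ⊗[ℂ] A) : ins23 A X = 1 ⊗ₜ X := rfl

@[simp]
lemma comulLeft_tmul (x y : A) :
    comulLeft A (x ⊗ₜ y) = TensorProduct.assoc ℂ A A A (comul x ⊗ₜ y) := rfl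

@[simp]
lemma comulRight_tmul (x y : A) : comulRight A (x ⊗ₜ y) = x ⊗ₜ comul y := rfl

lemma ins12_mul (X Y : A ⊗[ℂ] A) : ins12 A (X * Y) = ins12 A X * ins12 A Y := by
  have : ins12 A = (Algebra.TensorProduct.map (AlgHom.id ℂ A)
      (Algebra.TensorProduct.includeLeft : A →ₐ[ℂ] A ⊗[ℂ] A)).toLinearMap := by
    ext; rfl
  simp only [this, AlgHom.toLinearMap_apply, map_mul]

lemma ins12_one : ins12 A (1 : A ⊗[ℂ] A) = 1 := rfl

lemma ins23_mul (X Y : A ⊗[ℂ] A) : ins23 A (X * Y) = ins23 A X * ins23 A Y := by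
  simp [ins23_apply, Algebra.TensorProduct.tmul_mul_tmul]

lemma ins23_one : ins23 A (1 : A ⊗[ℂ] A) = 1 := rfl

lemma comulLeft_eq_ins12_mul_ins23_mul_comulRight (hF2 : Finv * Fm = 1)
    (hFcoc : ins12 A Fm * comulLeft A Fm = ins23 A Fm * comulRight A Fm) :
    comulLeft A Fm = ins12 A Finv * (ins23 A Fm * comulRight A Fm) := by
  rw [← hFcoc, ← mul_assoc, ← ins12_mul, hF2, ins12_one, one_mul]

lemma counitLeft_comulLeft (X : A ⊗[ℂ] A) : counitLeft ℂ A (A ⊗[ℂ] A) (comulLeft A X) = X := by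
  have hassoc : ∀ (Y : A ⊗[ℂ] A) (y : A),
      counitLeft ℂ A (A ⊗[ℂ] A) (TensorProduct.assoc ℂ A A A (Y ⊗ₜ y)) =
        counitLeft ℂ A A Y ⊗ₜ y := by
    intro Y y
    induction Y using TensorProduct.induction_on with
    | zero => simp
    | tmul a b => simp [TensorProduct.smul_tmul']
    | add Y₁ Y₂ h₁ h₂ => simp only [add_tmul, map_add, h₁, h₂]
  induction X using TensorProduct.induction_on with
  | zero => simp
  | tmul x y => rw [comulLeft_tmul, hassoc, counitLeft_comul]
  | add X₁ X₂ h₁ h₂ => simp only [map_add, h₁, h₂]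

lemma counitLeft_ins13 (X : A ⊗[ℂ] A) :
    counitLeft ℂ A (A ⊗[ℂ] A) (ins13 A X) = 1 ⊗ₜ counitLeft ℂ A A X := by
  induction X using TensorProduct.induction_on with
  | zero => simp
  | tmul x y => simp
  | add X₁ X₂ h₁ h₂ => simp only [map_add, h₁, h₂, tmul_add]

lemma counitLeft_ins23 (X : A ⊗[ℂ] A) : counitLeft ℂ A (A ⊗[ℂ] A) (ins23 A X) = X := by
  simp [ins23_apply]

lemma map_counitRight_comulRight (X : A ⊗[ℂ] A) : ε₃ (comulRight A X) = X := by
  induction X using TensorProduct.induction_on with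
  | zero => simp
  | tmul x y => simp
  | add X₁ X₂ h₁ h₂ => simp only [map_add, h₁, h₂]

lemma map_counitRight_ins13 (X : A ⊗[ℂ] A) : ε₃ (ins13 A X) = counitRight ℂ A A X ⊗ₜ 1 := by
  induction X using TensorProduct.induction_on with
  | zero => simp
  | tmul x y => simp [TensorProduct.smul_tmul']
  | add X₁ X₂ h₁ h₂ => simp only [map_add, h₁, h₂, add_tmul]

lemma map_counitRight_ins12 (X : A ⊗[ℂ] A) : ε₃ (ins12 A X) = X := by
  induction X using TensorProduct.induction_on with
  | zero => simp
  | tmul x y => simp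
  | add X₁ X₂ h₁ h₂ => simp only [map_add, h₁, h₂]

theorem counitLeft_eq_one_of_hexagon (hF1 : Fm * Finv = 1)
    (hFhex1 : comulLeft A Fm = ins13 A Fm * ins23 A Fm) : counitLeft ℂ A A Fm = 1 := by
  have h := congr(counitLeft ℂ A (A ⊗[ℂ] A) $hFhex1)
  rw [map_mul, counitLeft_comulLeft, counitLeft_ins13, counitLeft_ins23] at h
  have h1 : (1 : A) ⊗ₜ[ℂ] counitLeft ℂ A A Fm = 1 := by
    rw [← hF1]
    nth_rw 2 [h]
    rw [mul_assoc, hF1, mul_one]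
  simpa using congr(counitLeft ℂ A A $h1)

theorem counitRight_eq_one_of_hexagon (hF1 : Fm * Finv = 1)
    (hFhex2 : comulRight A Fm = ins13 A Fm * ins12 A Fm) : counitRight ℂ A A Fm = 1 := by
  have h := congr(ε₃ $hFhex2)
  rw [map_mul, map_counitRight_comulRight, map_counitRight_ins13, map_counitRight_ins12] at h
  have h1 : counitRight ℂ A A Fm ⊗ₜ[ℂ] (1 : A) = 1 := by
    rw [← hF1]
    nth_rw 2 [h]
    rw [mul_assoc, hF1, mul_one]
  simpa using congr(counitRight ℂ A A $h1)

lemma mulAntipodeMiddle_mul_comulLeft (U : A ⊗[ℂ] (A ⊗[ℂ] A)) (W : A ⊗[ℂ] A) :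
    mulAntipodeMiddle ℂ A (U * comulLeft A W) =
      mulAntipodeMiddle ℂ A U * counitLeft ℂ A A W := by
  induction U using TensorProduct.induction_on₃ with
  | zero => simp
  | add U₁ U₂ h₁ h₂ => simp only [add_mul, map_add, h₁, h₂]
  | tmul u₁ u₂ u₃ =>
    induction W using TensorProduct.induction_on with
    | zero => simp
    | add W₁ W₂ h₁ h₂ => simp only [mul_add, map_add, h₁, h₂]
    | tmul x y =>
      have key : ∀ Q : A ⊗[ℂ] A, mulAntipodeMiddle ℂ A
          (u₁ ⊗ₜ (u₂ ⊗ₜ u₃) * TensorProduct.assoc ℂ A A A (Q ⊗ₜ y)) =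
          u₁ * mulIdAntipode ℂ A Q * (S u₂ * (u₃ * y)) := by
        intro Q
        induction Q using TensorProduct.induction_on with
        | zero => simp
        | tmul p q => simp [Algebra.TensorProduct.tmul_mul_tmul,
            HopfAlgebra.antipode_mul_antidistrib, mul_assoc]
        | add Q₁ Q₂ h₁ h₂ => simp only [add_tmul, map_add, mul_add, add_mul, h₁, h₂]
      simp [key, mulIdAntipode_comul, mul_assoc]

lemma mulAntipodeMiddle_ins23_mul_ins12 (Z X : A ⊗[ℂ] A) :
    mulAntipodeMiddle ℂ A (ins23 A Z * ins12 A X) = mulIdAntipode ℂ A X * mulAntipodeId ℂ A Z := by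
  induction Z using TensorProduct.induction_on with
  | zero => simp [ins23_apply]
  | add Z₁ Z₂ h₁ h₂ => simp only [map_add, add_mul, mul_add, h₁, h₂]
  | tmul c d =>
    induction X using TensorProduct.induction_on with
    | zero => simp
    | add X₁ X₂ h₁ h₂ => simp only [map_add, add_mul, mul_add, h₁, h₂]
    | tmul a b => simp [ins23_apply, Algebra.TensorProduct.tmul_mul_tmul,
        HopfAlgebra.antipode_mul_antidistrib, mul_assoc]

lemma mulAntipodeMiddle_comulRight (X : A ⊗[ℂ] A) :
    mulAntipodeMiddle ℂ A (comulRight A X) = counitRight ℂ A A X := by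
  induction X using TensorProduct.induction_on with
  | zero => simp
  | add X₁ X₂ h₁ h₂ => simp only [map_add, h₁, h₂]
  | tmul x y => simp [mulAntipodeMiddle, mulAntipodeId_comul]

lemma mulAntipodeOuter_mul_comulRight (U : A ⊗[ℂ] (A ⊗[ℂ] A)) (W : A ⊗[ℂ] A) :
    mulAntipodeOuter ℂ A (U * comulRight A W) =
      S (counitRight ℂ A A W) * mulAntipodeOuter ℂ A U := by
  induction U using TensorProduct.induction_on₃ with
  | zero => simp
  | add U₁ U₂ h₁ h₂ => simp only [add_mul, map_add, mul_add, h₁, h₂]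
  | tmul u₁ u₂ u₃ =>
    induction W using TensorProduct.induction_on with
    | zero => simp
    | add W₁ W₂ h₁ h₂ => simp only [mul_add, map_add, add_mul, h₁, h₂]
    | tmul x y =>
      have key : ∀ Q : A ⊗[ℂ] A, mulAntipodeOuter ℂ A (u₁ ⊗ₜ (u₂ ⊗ₜ u₃) * x ⊗ₜ Q) =
          S x * (S u₁ * (u₂ * (mulIdAntipode ℂ A Q * S u₃))) := by
        intro Q
        induction Q using TensorProduct.induction_on with
        | zero => simp
        | tmul p q => simp [Algebra.TensorProduct.tmul_mul_tmul,
            HopfAlgebra.antipode_mul_antidistrib, mul_assoc]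
        | add Q₁ Q₂ h₁ h₂ => simp only [tmul_add, map_add, mul_add, add_mul, h₁, h₂]
      rw [comulRight_tmul, key, mulIdAntipode_comul]
      simp

lemma mulAntipodeOuter_ins12_mul_ins23 (Z X : A ⊗[ℂ] A) :
    mulAntipodeOuter ℂ A (ins12 A Z * ins23 A X) = mulAntipodeId ℂ A Z * mulIdAntipode ℂ A X := by
  induction Z using TensorProduct.induction_on with
  | zero => simp
  | add Z₁ Z₂ h₁ h₂ => simp only [map_add, add_mul, h₁, h₂]
  | tmul c d =>
    induction X using TensorProduct.induction_on with
    | zero => simp [ins23_apply]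
    | add X₁ X₂ h₁ h₂ => simp only [map_add, mul_add, h₁, h₂]
    | tmul a b => simp [ins23_apply, Algebra.TensorProduct.tmul_mul_tmul, mul_assoc]

lemma mulAntipodeOuter_comulLeft (X : A ⊗[ℂ] A) :
    mulAntipodeOuter ℂ A (comulLeft A X) = S (counitLeft ℂ A A X) := by
  induction X using TensorProduct.induction_on with
  | zero => simp
  | add X₁ X₂ h₁ h₂ => simp only [map_add, h₁, h₂]
  | tmul x y =>
    have key : ∀ Q : A ⊗[ℂ] A, mulAntipodeOuter ℂ A (TensorProduct.assoc ℂ A A A (Q ⊗ₜ y)) =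
        mulAntipodeId ℂ A Q * S y := by
      intro Q
      induction Q using TensorProduct.induction_on with
      | zero => simp
      | tmul p q => simp [mul_assoc]
      | add Q₁ Q₂ h₁ h₂ => simp only [add_tmul, map_add, add_mul, h₁, h₂]
    simp [key, mulAntipodeId_comul]

theorem mulIdAntipode_mul_mulAntipodeId (hF1 : Fm * Finv = 1) (hF2 : Finv * Fm = 1)
    (hFcoc : ins12 A Fm * comulLeft A Fm = ins23 A Fm * comulRight A Fm)
    (hFhex1 : comulLeft A Fm = ins13 A Fm * ins23 A Fm)
    (hFhex2 : comulRight A Fm = ins13 A Fm * ins12 A Fm) :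
    mulIdAntipode ℂ A Fm * mulAntipodeId ℂ A Finv = 1 := by
  have hcoc : ins23 A Finv * ins12 A Fm * comulLeft A Fm = comulRight A Fm := by
    rw [mul_assoc, hFcoc, ← mul_assoc, ← ins23_mul, hF2, ins23_one, one_mul]
  have h := congr(mulAntipodeMiddle ℂ A $hcoc)
  rwa [mulAntipodeMiddle_mul_comulLeft, mulAntipodeMiddle_ins23_mul_ins12,
    mulAntipodeMiddle_comulRight, counitLeft_eq_one_of_hexagon hF1 hFhex1,
    counitRight_eq_one_of_hexagon hF1 hFhex2, mul_one] at h

theorem mulAntipodeId_mul_mulIdAntipode (hF1 : Fm * Finv = 1) (hF2 : Finv * Fm = 1)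
    (hFcoc : ins12 A Fm * comulLeft A Fm = ins23 A Fm * comulRight A Fm)
    (hFhex1 : comulLeft A Fm = ins13 A Fm * ins23 A Fm)
    (hFhex2 : comulRight A Fm = ins13 A Fm * ins12 A Fm) :
    mulAntipodeId ℂ A Finv * mulIdAntipode ℂ A Fm = 1 := by
  have h := congr(mulAntipodeOuter ℂ A $(comulLeft_eq_ins12_mul_ins23_mul_comulRight hF2 hFcoc))
  rw [← mul_assoc, mulAntipodeOuter_mul_comulRight, mulAntipodeOuter_ins12_mul_ins23,
    mulAntipodeOuter_comulLeft, counitLeft_eq_one_of_hexagon hF1 hFhex1,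
    counitRight_eq_one_of_hexagon hF1 hFhex2, HopfAlgebra.antipode_one, one_mul] at h
  exact h.symm

lemma lTensor_mulIdAntipode_ins12_mul (Z : A ⊗[ℂ] A) (W : A ⊗[ℂ] (A ⊗[ℂ] A)) :
    LinearMap.lTensor A (mulIdAntipode ℂ A) (ins12 A Z * W) =
      Z * LinearMap.lTensor A (mulIdAntipode ℂ A) W := by
  induction Z using TensorProduct.induction_on with
  | zero => simp
  | add Z₁ Z₂ h₁ h₂ => simp only [map_add, add_mul, h₁, h₂]
  | tmul a b =>
    induction W using TensorProduct.induction_on₃ with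
    | zero => simp
    | add W₁ W₂ h₁ h₂ => simp only [map_add, mul_add, h₁, h₂]
    | tmul x y z => simp [Algebra.TensorProduct.tmul_mul_tmul, mul_assoc]

lemma lTensor_mulIdAntipode_ins13_mul (U : A ⊗[ℂ] A) (W : A ⊗[ℂ] (A ⊗[ℂ] A)) :
    LinearMap.lTensor A (mulIdAntipode ℂ A) (ins13 A U * W) =
      sandwich ι₁ (ι₂ ∘ₗ S) (LinearMap.lTensor A (mulIdAntipode ℂ A) W) U := by
  induction W using TensorProduct.induction_on₃ with
  | zero => simp
  | add W₁ W₂ h₁ h₂ => simp only [map_add, mul_add, h₁, h₂, sandwich_add, LinearMap.add_apply]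
  | tmul x y z =>
    induction U using TensorProduct.induction_on with
    | zero => simp
    | add U₁ U₂ h₁ h₂ => simp only [map_add, add_mul, h₁, h₂]
    | tmul a b => simp [Algebra.TensorProduct.tmul_mul_tmul,
        HopfAlgebra.antipode_mul_antidistrib, mul_assoc]

lemma lTensor_mulIdAntipode_ins23_mul_comulRight (U W : A ⊗[ℂ] A) :
    LinearMap.lTensor A (mulIdAntipode ℂ A) (ins23 A U * comulRight A W) =
      counitRight ℂ A A W ⊗ₜ mulIdAntipode ℂ A U := by
  induction W using TensorProduct.induction_on with
  | zero => simp
  | add W₁ W₂ h₁ h₂ => simp only [map_add, mul_add, h₁, h₂, add_tmul]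
  | tmul x y =>
    induction U using TensorProduct.induction_on with
    | zero => simp [ins23_apply]
    | add U₁ U₂ h₁ h₂ => simp only [map_add, add_mul, h₁, h₂, tmul_add]
    | tmul c d =>
      have key : ∀ Q : A ⊗[ℂ] A, LinearMap.lTensor A (mulIdAntipode ℂ A)
          (ins23 A (c ⊗ₜ d) * x ⊗ₜ Q) = x ⊗ₜ (c * mulIdAntipode ℂ A Q * S d) := by
        intro Q
        induction Q using TensorProduct.induction_on with
        | zero => simp
        | tmul p q => simp [ins23_apply, Algebra.TensorProduct.tmul_mul_tmul,
            HopfAlgebra.antipode_mul_antidistrib, mul_assoc]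
        | add Q₁ Q₂ h₁ h₂ => simp only [tmul_add, map_add, mul_add, add_mul, h₁, h₂]
      rw [comulRight_tmul, key, mulIdAntipode_comul]
      simp [TensorProduct.smul_tmul']

lemma lTensor_mulIdAntipode_ins12 (V : A ⊗[ℂ] A) :
    LinearMap.lTensor A (mulIdAntipode ℂ A) (ins12 A V) = V := by
  induction V using TensorProduct.induction_on with
  | zero => simp
  | add V₁ V₂ h₁ h₂ => simp only [map_add, h₁, h₂]
  | tmul a b => simp

lemma mulComulAntipode_ins12_mul (Z : A ⊗[ℂ] A) (W : A ⊗[ℂ] (A ⊗[ℂ] A)) :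
    mulComulAntipode ℂ A (ins12 A Z * W) = Z * mulComulAntipode ℂ A W := by
  induction Z using TensorProduct.induction_on with
  | zero => simp
  | add Z₁ Z₂ h₁ h₂ => simp only [map_add, add_mul, h₁, h₂]
  | tmul a b =>
    induction W using TensorProduct.induction_on₃ with
    | zero => simp
    | add W₁ W₂ h₁ h₂ => simp only [map_add, mul_add, h₁, h₂]
    | tmul x y z => simp [Algebra.TensorProduct.tmul_mul_tmul, ← mul_assoc]

lemma mulComulAntipode_ins13_mul (Y : A ⊗[ℂ] A) (W : A ⊗[ℂ] (A ⊗[ℂ] A)) :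
    mulComulAntipode ℂ A (ins13 A Y * W) =
      sandwich ι₁ (comul ∘ₗ S) (mulComulAntipode ℂ A W) Y := by
  induction W using TensorProduct.induction_on₃ with
  | zero => simp
  | add W₁ W₂ h₁ h₂ => simp only [map_add, mul_add, h₁, h₂, sandwich_add, LinearMap.add_apply]
  | tmul x y z =>
    induction Y using TensorProduct.induction_on with
    | zero => simp
    | add Y₁ Y₂ h₁ h₂ => simp only [map_add, add_mul, h₁, h₂]
    | tmul c d => simp [Algebra.TensorProduct.tmul_mul_tmul,
        HopfAlgebra.antipode_mul_antidistrib, ← mul_assoc]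

lemma mulComulAntipode_ins23_mul (X : A ⊗[ℂ] A) (W : A ⊗[ℂ] (A ⊗[ℂ] A)) :
    mulComulAntipode ℂ A (ins23 A X * W) =
      sandwich ι₂ (comul ∘ₗ S) (mulComulAntipode ℂ A W) X := by
  induction W using TensorProduct.induction_on₃ with
  | zero => simp
  | add W₁ W₂ h₁ h₂ => simp only [map_add, mul_add, h₁, h₂, sandwich_add, LinearMap.add_apply]
  | tmul x y z =>
    induction X using TensorProduct.induction_on with
    | zero => simp [ins23_apply]
    | add X₁ X₂ h₁ h₂ => simp only [map_add, add_mul, h₁, h₂]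
    | tmul a b => simp [ins23_apply, Algebra.TensorProduct.tmul_mul_tmul,
        HopfAlgebra.antipode_mul_antidistrib, ← mul_assoc]

lemma mulComulAntipode_ins12 (Z : A ⊗[ℂ] A) : mulComulAntipode ℂ A (ins12 A Z) = Z := by
  induction Z using TensorProduct.induction_on with
  | zero => simp
  | add Z₁ Z₂ h₁ h₂ => simp only [map_add, h₁, h₂]
  | tmul a b => simp

lemma mulComulAntipode_comulLeft (W : A ⊗[ℂ] A) :
    mulComulAntipode ℂ A (comulLeft A W) = comul (mulIdAntipode ℂ A W) := by
  induction W using TensorProduct.induction_on with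
  | zero => simp
  | add W₁ W₂ h₁ h₂ => simp only [map_add, h₁, h₂]
  | tmul x y =>
    have key : ∀ Q : A ⊗[ℂ] A,
        mulComulAntipode ℂ A (TensorProduct.assoc ℂ A A A (Q ⊗ₜ y)) = Q * comul (S y) := by
      intro Q
      induction Q using TensorProduct.induction_on with
      | zero => simp
      | tmul p q => simp
      | add Q₁ Q₂ h₁ h₂ => simp only [add_tmul, map_add, add_mul, h₁, h₂]
    simp [key]

lemma sandwich_swap_antipode_ins13_mul_ins12 (f : A →ₐ[ℂ] A ⊗[ℂ] A) (Z U V : A ⊗[ℂ] A) :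
    sandwich f.toLinearMap (map S S ∘ₗ (TensorProduct.comm ℂ A A).toLinearMap) Z
        (ins13 A U * ins12 A V) =
      sandwich f.toLinearMap (ι₁ ∘ₗ S) (sandwich f.toLinearMap (ι₂ ∘ₗ S) Z V) U := by
  induction U using TensorProduct.induction_on with
  | zero => simp
  | add U₁ U₂ h₁ h₂ => simp only [map_add, add_mul, h₁, h₂]
  | tmul a b =>
    induction V using TensorProduct.induction_on with
    | zero => simp
    | add V₁ V₂ h₁ h₂ => simp only [map_add, mul_add, h₁, h₂, sandwich_add, LinearMap.add_apply]
    | tmul e g => simp [Algebra.TensorProduct.tmul_mul_tmul, mul_assoc]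

lemma sandwich_comul_antipode (f : A →ₐ[ℂ] A ⊗[ℂ] A) (Z : A ⊗[ℂ] A) {U V Y : A ⊗[ℂ] A}
    (hY : comulRight A Y = ins13 A U * ins12 A V) :
    sandwich f.toLinearMap (comul ∘ₗ S) Z Y =
      sandwich f.toLinearMap (ι₁ ∘ₗ S) (sandwich f.toLinearMap (ι₂ ∘ₗ S) Z V) U := by
  rw [comul_comp_antipode, sandwich_comp_lTensor, LinearMap.comp_apply,
    show LinearMap.lTensor A comul Y = comulRight A Y from rfl, hY,
    sandwich_swap_antipode_ins13_mul_ins12]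

theorem sandwich_self_eq_one_of_hexagon (hF1 : Fm * Finv = 1)
    (hFhex2 : comulRight A Fm = ins13 A Fm * ins12 A Fm) :
    sandwich ι₁ (ι₂ ∘ₗ S) Fm Fm = 1 := by
  have h := congr(LinearMap.lTensor A (mulIdAntipode ℂ A) $hFhex2)
  rw [← one_mul (comulRight A Fm), ← ins23_one, lTensor_mulIdAntipode_ins23_mul_comulRight,
    lTensor_mulIdAntipode_ins13_mul, lTensor_mulIdAntipode_ins12,
    counitRight_eq_one_of_hexagon hF1 hFhex2] at h
  simpa [Algebra.TensorProduct.one_def] using h.symm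

theorem sandwich_one_tmul_mulIdAntipode (hF1 : Fm * Finv = 1) (hF2 : Finv * Fm = 1)
    (hFcoc : ins12 A Fm * comulLeft A Fm = ins23 A Fm * comulRight A Fm)
    (hFhex1 : comulLeft A Fm = ins13 A Fm * ins23 A Fm)
    (hFhex2 : comulRight A Fm = ins13 A Fm * ins12 A Fm) :
    sandwich ι₁ (ι₂ ∘ₗ S) (1 ⊗ₜ mulIdAntipode ℂ A Fm) Fm = Finv * (1 ⊗ₜ mulIdAntipode ℂ A Fm) := by
  have h := congr(LinearMap.lTensor A (mulIdAntipode ℂ A)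
    $(comulLeft_eq_ins12_mul_ins23_mul_comulRight hF2 hFcoc))
  rwa [lTensor_mulIdAntipode_ins12_mul, lTensor_mulIdAntipode_ins23_mul_comulRight,
    counitRight_eq_one_of_hexagon hF1 hFhex2, hFhex1, lTensor_mulIdAntipode_ins13_mul] at h

theorem sandwich_includeLeft_comul_antipode_self (hF1 : Fm * Finv = 1)
    (hFhex2 : comulRight A Fm = ins13 A Fm * ins12 A Fm) :
    sandwich ι₁ (comul ∘ₗ S) Fm Fm = mulIdAntipode ℂ A Fm ⊗ₜ 1 := by
  rw [sandwich_comul_antipode _ _ hFhex2, sandwich_self_eq_one_of_hexagon hF1 hFhex2,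
    sandwich_includeLeft_one]

theorem sandwich_includeRight_comul_antipode_mulIdAntipode (hF1 : Fm * Finv = 1)
    (hF2 : Finv * Fm = 1)
    (hFcoc : ins12 A Fm * comulLeft A Fm = ins23 A Fm * comulRight A Fm)
    (hFhex1 : comulLeft A Fm = ins13 A Fm * ins23 A Fm)
    (hFhex2 : comulRight A Fm = ins13 A Fm * ins12 A Fm) :
    sandwich ι₂ (comul ∘ₗ S) (mulIdAntipode ℂ A Fm ⊗ₜ 1) Fm =
      TensorProduct.comm ℂ A A Finv * (mulIdAntipode ℂ A Fm ⊗ₜ mulIdAntipode ℂ A Fm) := by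
  rw [sandwich_comul_antipode _ _ hFhex2, sandwich_includeRight_tmul_one,
    sandwich_includeRight_includeLeft, sandwich_one_tmul_mulIdAntipode hF1 hF2 hFcoc hFhex1 hFhex2,
    show TensorProduct.comm ℂ A A =
      (Algebra.TensorProduct.comm ℂ A A : A ⊗[ℂ] A → A ⊗[ℂ] A) from rfl,
    map_mul, mul_assoc]
  simp [Algebra.TensorProduct.tmul_mul_tmul]

theorem mul_comul_mulIdAntipode (hF1 : Fm * Finv = 1) (hF2 : Finv * Fm = 1)
    (hFcoc : ins12 A Fm * comulLeft A Fm = ins23 A Fm * comulRight A Fm)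
    (hFhex1 : comulLeft A Fm = ins13 A Fm * ins23 A Fm)
    (hFhex2 : comulRight A Fm = ins13 A Fm * ins12 A Fm) :
    Fm * comul (mulIdAntipode ℂ A Fm) =
      TensorProduct.comm ℂ A A Finv * (mulIdAntipode ℂ A Fm ⊗ₜ mulIdAntipode ℂ A Fm) := by
  calc Fm * comul (mulIdAntipode ℂ A Fm)
      = mulComulAntipode ℂ A (ins23 A Fm * (ins13 A Fm * ins12 A Fm)) := by
        rw [← hFhex2, ← hFcoc, mulComulAntipode_ins12_mul, mulComulAntipode_comulLeft]
    _ = sandwich ι₂ (comul ∘ₗ S) (sandwich ι₁ (comul ∘ₗ S) Fm Fm) Fm := by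
        rw [mulComulAntipode_ins23_mul, mulComulAntipode_ins13_mul, mulComulAntipode_ins12]
    _ = _ := by
        rw [sandwich_includeLeft_comul_antipode_self hF1 hFhex2,
          sandwich_includeRight_comul_antipode_mulIdAntipode hF1 hF2 hFcoc hFhex1 hFhex2]

theorem comul_mulIdAntipode (hF1 : Fm * Finv = 1) (hF2 : Finv * Fm = 1)
    (hFcoc : ins12 A Fm * comulLeft A Fm = ins23 A Fm * comulRight A Fm)
    (hFhex1 : comulLeft A Fm = ins13 A Fm * ins23 A Fm)
    (hFhex2 : comulRight A Fm = ins13 A Fm * ins12 A Fm) :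
    comul (mulIdAntipode ℂ A Fm) = Finv * TensorProduct.comm ℂ A A Finv *
      (mulIdAntipode ℂ A Fm ⊗ₜ mulIdAntipode ℂ A Fm) := by
  rw [mul_assoc, ← mul_comul_mulIdAntipode hF1 hF2 hFcoc hFhex1 hFhex2, ← mul_assoc, hF2, one_mul]

end Twist

section

variable (A : Type) [Ring A] [HopfAlgebra ℂ A]

theorem twisting_element_phi_coproduct
    (Fm Finv : A ⊗[ℂ] A)
    (hF1 : Fm * Finv = 1) (hF2 : Finv * Fm = 1)
    (hFcoc : ins12 A Fm * comulLeft A Fm = ins23 A Fm * comulRight A Fm)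
    (hFhex1 : comulLeft A Fm = ins13 A Fm * ins23 A Fm)
    (hFhex2 : comulRight A Fm = ins13 A Fm * ins12 A Fm) :
    LinearMap.mul' ℂ A (TensorProduct.map LinearMap.id (HopfAlgebra.antipode (R := ℂ)) Fm) *
        LinearMap.mul' ℂ A (TensorProduct.map (HopfAlgebra.antipode (R := ℂ)) LinearMap.id Finv)
        = 1 ∧
    LinearMap.mul' ℂ A (TensorProduct.map (HopfAlgebra.antipode (R := ℂ)) LinearMap.id Finv) *
        LinearMap.mul' ℂ A (TensorProduct.map LinearMap.id (HopfAlgebra.antipode (R := ℂ)) Fm)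
        = 1 ∧
    Coalgebra.comul (R := ℂ)
        (LinearMap.mul' ℂ A (TensorProduct.map LinearMap.id (HopfAlgebra.antipode (R := ℂ)) Fm))
      = Finv * (TensorProduct.comm ℂ A A Finv) *
        ((LinearMap.mul' ℂ A (TensorProduct.map LinearMap.id (HopfAlgebra.antipode (R := ℂ)) Fm)) ⊗ₜ[ℂ]
         (LinearMap.mul' ℂ A (TensorProduct.map LinearMap.id (HopfAlgebra.antipode (R := ℂ)) Fm))) :=
  ⟨mulIdAntipode_mul_mulAntipodeId hF1 hF2 hFcoc hFhex1 hFhex2,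
    mulAntipodeId_mul_mulIdAntipode hF1 hF2 hFcoc hFhex1 hFhex2,
    comul_mulIdAntipode hF1 hF2 hFcoc hFhex1 hFhex2⟩

end
end
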